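/- arXiv:2510.05469 — 7 statements merged into one kernel-verified Lean document; each statement's English description precedes it below -/
import Mathlib

section
/- Let σ, τ : [0,∞) → [0,∞) be non-decreasing. Then: (i) if σ or τ satisfies (ω₆), then σ ⪯ τ implies σ ⪯_c τ; (ii) if σ or τ satisfies (ω₁), then σ ⪯_c τ implies σ ⪯ τ; (iii) if σ or τ satisfies (ω₁), then σ ◁ τ implies σ ◁_c τ; (iv) if σ or τ satisfies (ω₆), then σ ◁_c τ implies σ ◁ τ. -/
/-- Condition (ω₁): `ω(2t) = O(ω(t))` as `t → ∞`. -/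
def OmOne (ω : ℝ → ℝ) : Prop :=
  ∃ C ≥ (1:ℝ), ∃ T ≥ (0:ℝ), ∀ t ≥ T, ω (2 * t) ≤ C * ω t

/-- Condition (ω₆): `∃ H ≥ 1, ∀ t ≥ 0, 2·ω(t) ≤ ω(H·t) + H`. -/
def OmSix (ω : ℝ → ℝ) : Prop :=
  ∃ H ≥ (1:ℝ), ∀ t ≥ (0:ℝ), 2 * ω t ≤ ω (H * t) + H

/-- Relation `σ ⪯ τ`. -/
def Preceq (σ τ : ℝ → ℝ) : Prop :=
  ∃ C ≥ (1:ℝ), ∀ t ≥ (0:ℝ), τ t ≤ C * σ t + C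

/-- Relation `σ ⪯_c τ`. -/
def PreceqC (σ τ : ℝ → ℝ) : Prop :=
  ∃ C₁ ≥ (1:ℝ), ∃ C₂ ≥ (1:ℝ), ∀ t ≥ (0:ℝ), τ t ≤ σ (C₁ * t) + C₂

/-- Relation `σ ◁ τ`. -/
def Tri (σ τ : ℝ → ℝ) : Prop :=
  ∀ ε > (0:ℝ), ∃ C ≥ (1:ℝ), ∀ t ≥ (0:ℝ), τ t ≤ ε * σ t + C

/-- Relation `σ ◁_c τ`. -/
def TriC (σ τ : ℝ → ℝ) : Prop :=
  ∀ ε > (0:ℝ), ∃ C ≥ (1:ℝ), ∀ t ≥ (0:ℝ), τ t ≤ σ (ε * t) + C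

/-!
Iterating (ω₆) gives `2ᵏ ω(t) ≤ ω(Hᵏ t) + O(1)`, so under (ω₆) a constant factor in front of `ω`
can be traded for a dilation of its argument. Iterating (ω₁) gives `ω(2ᵏ t) ≤ Cᵏ ω(t)` for large
`t`, so under (ω₁), for a monotone `ω`, a dilation of the argument can be traded for a constant
factor. Each of the four implications is one such trade, made on `σ` or on `τ`.
-/

open Set

lemma two_pow_mul_le_of_two_mul_le {ω : ℝ → ℝ} {H : ℝ}
    (h : ∀ t ≥ (0:ℝ), 2 * ω t ≤ ω (H * t) + H) (hH : 0 ≤ H) (k : ℕ) {t : ℝ} (ht : 0 ≤ t) :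
    2 ^ k * ω t ≤ ω (H ^ k * t) + (2 ^ k - 1) * H := by
  induction k with
  | zero => simp
  | succ k ih =>
    have hstep := h (H ^ k * t) (by positivity)
    rw [← mul_assoc, ← pow_succ'] at hstep
    rw [pow_succ']
    linarith

lemma le_pow_mul_of_le_two_mul {ω : ℝ → ℝ} {C T : ℝ}
    (h : ∀ t ≥ T, ω (2 * t) ≤ C * ω t) (hC : 0 ≤ C) (hT : 0 ≤ T) (k : ℕ) {t : ℝ} (ht : T ≤ t) :
    ω (2 ^ k * t) ≤ C ^ k * ω t := by
  induction k with
  | zero => simp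
  | succ k ih =>
    have hle : T ≤ 2 ^ k * t :=
      ht.trans (le_mul_of_one_le_left (hT.trans ht) (one_le_pow₀ one_le_two))
    calc ω (2 ^ (k + 1) * t) = ω (2 * (2 ^ k * t)) := by rw [pow_succ', mul_assoc]
      _ ≤ C * ω (2 ^ k * t) := h _ hle
      _ ≤ C * (C ^ k * ω t) := mul_le_mul_of_nonneg_left ih hC
      _ = C ^ (k + 1) * ω t := by ring

theorem OmSix.exists_mul_le {ω : ℝ → ℝ} (h6 : OmSix ω) (h0 : ∀ t ≥ 0, 0 ≤ ω t) (M : ℝ) :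
    ∃ L ≥ (1:ℝ), ∃ D ≥ (0:ℝ), ∀ t ≥ (0:ℝ), M * ω t ≤ ω (L * t) + D := by
  obtain ⟨H, hH, h⟩ := h6
  obtain ⟨k, hk⟩ := pow_unbounded_of_one_lt M one_lt_two
  refine ⟨H ^ k, one_le_pow₀ hH, (2 ^ k - 1) * H, ?_, fun t ht => ?_⟩
  · have : (1:ℝ) ≤ 2 ^ k := one_le_pow₀ one_le_two
    nlinarith
  · calc M * ω t ≤ 2 ^ k * ω t := mul_le_mul_of_nonneg_right hk.le (h0 t ht)
      _ ≤ ω (H ^ k * t) + (2 ^ k - 1) * H :=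
        two_pow_mul_le_of_two_mul_le h (by linarith) k ht

theorem OmOne.exists_le_mul {ω : ℝ → ℝ} (h1 : OmOne ω) (h0 : ∀ t ≥ 0, 0 ≤ ω t)
    (hmono : MonotoneOn ω (Ici 0)) {c : ℝ} (hc : 0 < c) :
    ∃ K ≥ (1:ℝ), ∃ D ≥ (0:ℝ), ∀ t ≥ (0:ℝ), ω t ≤ K * ω (c * t) + D := by
  obtain ⟨C, hC, T, hT, h⟩ := h1
  obtain ⟨k, hk⟩ := pow_unbounded_of_one_lt c⁻¹ one_lt_two
  refine ⟨C ^ k, one_le_pow₀ hC, ω (T / c), h0 _ (by positivity), fun t ht => ?_⟩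
  have hct : 0 ≤ c * t := by positivity
  rcases le_total T (c * t) with hTct | hctT
  · have hdil : t ≤ 2 ^ k * (c * t) :=
      calc t = c⁻¹ * (c * t) := by field_simp
        _ ≤ 2 ^ k * (c * t) := mul_le_mul_of_nonneg_right hk.le hct
    calc ω t ≤ ω (2 ^ k * (c * t)) := hmono ht (mem_Ici.2 (by positivity)) hdil
      _ ≤ C ^ k * ω (c * t) := le_pow_mul_of_le_two_mul h (by linarith) hT k hTct
      _ ≤ C ^ k * ω (c * t) + ω (T / c) := le_add_of_nonneg_right (h0 _ (by positivity))
  · have hsmall : t ≤ T / c := by rw [le_div_iff₀ hc]; linarith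
    calc ω t ≤ ω (T / c) := hmono ht (mem_Ici.2 (by positivity)) hsmall
      _ ≤ C ^ k * ω (c * t) + ω (T / c) :=
        le_add_of_nonneg_left (mul_nonneg (by positivity) (h0 _ hct))

variable {σ τ : ℝ → ℝ}

theorem Preceq.preceqC_of_omSix_left (h : Preceq σ τ) (h6 : OmSix σ)
    (hσ0 : ∀ t ≥ 0, 0 ≤ σ t) : PreceqC σ τ := by
  obtain ⟨C, hC, hle⟩ := h
  obtain ⟨L, hL, D, hD, hσL⟩ := h6.exists_mul_le hσ0 C
  exact ⟨L, hL, D + C, by linarith, fun t ht => by linarith [hle t ht, hσL t ht]⟩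

theorem Preceq.preceqC_of_omSix_right (h : Preceq σ τ) (h6 : OmSix τ)
    (hτ0 : ∀ t ≥ 0, 0 ≤ τ t) : PreceqC σ τ := by
  obtain ⟨C, hC, hle⟩ := h
  obtain ⟨L, hL, D, hD, hτL⟩ := h6.exists_mul_le hτ0 C
  refine ⟨L, hL, 1 + D, by linarith, fun t ht => ?_⟩
  have : C * τ t ≤ C * (σ (L * t) + (1 + D)) := by
    nlinarith [hτL t ht, hle (L * t) (by positivity), mul_nonneg (sub_nonneg.2 hC) hD]
  exact le_of_mul_le_mul_left this (by linarith)

theorem PreceqC.preceq_of_omOne_left (h : PreceqC σ τ) (h1 : OmOne σ)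
    (hσ0 : ∀ t ≥ 0, 0 ≤ σ t) (hσ : MonotoneOn σ (Ici 0)) : Preceq σ τ := by
  obtain ⟨C₁, hC₁, C₂, hC₂, hle⟩ := h
  obtain ⟨K, hK, D, hD, hσK⟩ := h1.exists_le_mul hσ0 hσ (inv_pos.2 (by linarith : 0 < C₁))
  refine ⟨K + D + C₂, by linarith, fun t ht => ?_⟩
  have hdil := hσK (C₁ * t) (by positivity)
  rw [inv_mul_cancel_left₀ (by positivity : C₁ ≠ 0)] at hdil
  nlinarith [hle t ht, mul_nonneg (by linarith : 0 ≤ D + C₂) (hσ0 t ht)]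

theorem PreceqC.preceq_of_omOne_right (h : PreceqC σ τ) (h1 : OmOne τ)
    (hσ0 : ∀ t ≥ 0, 0 ≤ σ t) (hτ0 : ∀ t ≥ 0, 0 ≤ τ t) (hτ : MonotoneOn τ (Ici 0)) :
    Preceq σ τ := by
  obtain ⟨C₁, hC₁, C₂, hC₂, hle⟩ := h
  obtain ⟨K, hK, D, hD, hτK⟩ := h1.exists_le_mul hτ0 hτ (inv_pos.2 (by linarith : 0 < C₁))
  refine ⟨K + K * C₂ + D, by nlinarith, fun t ht => ?_⟩
  have hsub := hle (C₁⁻¹ * t) (by positivity)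
  rw [mul_inv_cancel_left₀ (by positivity : C₁ ≠ 0)] at hsub
  nlinarith [hτK t ht, mul_nonneg (by positivity : 0 ≤ K * C₂ + D) (hσ0 t ht)]

theorem Tri.triC_of_omOne_left (h : Tri σ τ) (h1 : OmOne σ)
    (hσ0 : ∀ t ≥ 0, 0 ≤ σ t) (hσ : MonotoneOn σ (Ici 0)) : TriC σ τ := by
  intro ε hε
  obtain ⟨K, hK, D, hD, hσK⟩ := h1.exists_le_mul hσ0 hσ hε
  obtain ⟨C, hC, hle⟩ := h K⁻¹ (by positivity)
  refine ⟨D + C, by linarith, fun t ht => ?_⟩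
  have hKD : K⁻¹ * D ≤ D := mul_le_of_le_one_left hD (inv_le_one_of_one_le₀ hK)
  calc τ t ≤ K⁻¹ * σ t + C := hle t ht
    _ ≤ K⁻¹ * (K * σ (ε * t) + D) + C := by gcongr; exact hσK t ht
    _ = σ (ε * t) + K⁻¹ * D + C := by field_simp
    _ ≤ σ (ε * t) + (D + C) := by linarith

theorem Tri.triC_of_omOne_right (h : Tri σ τ) (h1 : OmOne τ)
    (hτ0 : ∀ t ≥ 0, 0 ≤ τ t) (hτ : MonotoneOn τ (Ici 0)) : TriC σ τ := by
  intro ε hε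
  obtain ⟨K, hK, D, hD, hτK⟩ := h1.exists_le_mul hτ0 hτ hε
  obtain ⟨C, hC, hle⟩ := h K⁻¹ (by positivity)
  refine ⟨K * C + D, by nlinarith, fun t ht => ?_⟩
  calc τ t ≤ K * τ (ε * t) + D := hτK t ht
    _ ≤ K * (K⁻¹ * σ (ε * t) + C) + D := by gcongr; exact hle _ (by positivity)
    _ = σ (ε * t) + (K * C + D) := by field_simp; ring

theorem TriC.tri_of_omSix_left (h : TriC σ τ) (h6 : OmSix σ) (hσ0 : ∀ t ≥ 0, 0 ≤ σ t) :
    Tri σ τ := by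
  intro ε hε
  obtain ⟨L, hL, D, hD, hσL⟩ := h6.exists_mul_le hσ0 ε⁻¹
  obtain ⟨C, hC, hle⟩ := h L⁻¹ (by positivity)
  refine ⟨ε * D + C, by nlinarith, fun t ht => ?_⟩
  have hdil := hσL (L⁻¹ * t) (by positivity)
  rw [mul_inv_cancel_left₀ (by positivity : L ≠ 0)] at hdil
  calc τ t ≤ σ (L⁻¹ * t) + C := hle t ht
    _ = ε * (ε⁻¹ * σ (L⁻¹ * t)) + C := by field_simp
    _ ≤ ε * (σ t + D) + C := by gcongr
    _ = ε * σ t + (ε * D + C) := by ring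

theorem TriC.tri_of_omSix_right (h : TriC σ τ) (h6 : OmSix τ) (hτ0 : ∀ t ≥ 0, 0 ≤ τ t) :
    Tri σ τ := by
  intro ε hε
  obtain ⟨L, hL, D, hD, hτL⟩ := h6.exists_mul_le hτ0 ε⁻¹
  obtain ⟨C, hC, hle⟩ := h L⁻¹ (by positivity)
  refine ⟨ε * (C + D) + 1, by nlinarith, fun t ht => ?_⟩
  have hsub := hle (L * t) (by positivity)
  rw [inv_mul_cancel_left₀ (by positivity : L ≠ 0)] at hsub
  calc τ t = ε * (ε⁻¹ * τ t) := by field_simp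
    _ ≤ ε * (σ t + (C + D)) := by gcongr; linarith [hτL t ht]
    _ ≤ ε * σ t + (ε * (C + D) + 1) := by linarith

/-- comparison of the relations `⪯`, `⪯_c`, `◁`, `◁_c`
for non-decreasing `σ, τ : [0,∞) → [0,∞)`. -/
theorem stmt_1 (σ τ : ℝ → ℝ)
    (hσ0 : ∀ t, 0 ≤ t → 0 ≤ σ t) (hτ0 : ∀ t, 0 ≤ t → 0 ≤ τ t)
    (hσ : ∀ s t, 0 ≤ s → s ≤ t → σ s ≤ σ t)
    (hτ : ∀ s t, 0 ≤ s → s ≤ t → τ s ≤ τ t) :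
    ((OmSix σ ∨ OmSix τ) → Preceq σ τ → PreceqC σ τ) ∧
    ((OmOne σ ∨ OmOne τ) → PreceqC σ τ → Preceq σ τ) ∧
    ((OmOne σ ∨ OmOne τ) → Tri σ τ → TriC σ τ) ∧
    ((OmSix σ ∨ OmSix τ) → TriC σ τ → Tri σ τ) := by
  have hσm : MonotoneOn σ (Ici 0) := fun s hs t _ hst => hσ s t hs hst
  have hτm : MonotoneOn τ (Ici 0) := fun s hs t _ hst => hτ s t hs hst
  refine ⟨fun h6 h => ?_, fun h1 h => ?_, fun h1 h => ?_, fun h6 h => ?_⟩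
  · exact h6.elim (h.preceqC_of_omSix_left · hσ0) (h.preceqC_of_omSix_right · hτ0)
  · exact h1.elim (h.preceq_of_omOne_left · hσ0 hσm) (h.preceq_of_omOne_right · hσ0 hτ0 hτm)
  · exact h1.elim (h.triC_of_omOne_left · hσ0 hσm) (h.triC_of_omOne_right · hτ0 hτm)
  · exact h6.elim (h.tri_of_omSix_left · hσ0) (h.tri_of_omSix_right · hτ0)
end

section
/- Let ω : [0,∞) → [0,∞) be non-decreasing and assume there exist C, D ≥ 1 such that ω(λ·t) ≤ C·λ·ω(t) + D·λ for all λ ≥ 1 and all t ≥ 0. Then there exist A ≥ 1 and a convex function h : (0,∞) → [0,∞) such that h(t) ≤ ω(1/t) ≤ A·h(t) + A for all t ∈ (0,∞); i.e. the function ω^ι(t) := ω(1/t) is equivalent to its largest convex minorant. -/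
/-!
For a non-negative non-increasing `g` on `(0,∞)` and `u > 0`, the line through `(0, g u)` and
`(u, 0)` lies below `g` on `(0,∞)`, so the supremum `h` of these lines is a convex minorant of `g`.
Taking `u = 2t` gives `g (2t) ≤ 2 h(t)`. For `g = ω^ι` the growth condition with `λ = 2` reads
`ω^ι(t) ≤ 2C ω^ι(2t) + 2D`, hence `ω^ι ≤ 4C h + 2D`.
-/

open Set

theorem ConvexOn.ciSup {ι E : Type*} [Nonempty ι] [AddCommMonoid E] [Module ℝ E] {s : Set E}
    {f : ι → E → ℝ} (hf : ∀ i, ConvexOn ℝ s (f i))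
    (hbdd : ∀ x ∈ s, BddAbove (range fun i => f i x)) :
    ConvexOn ℝ s fun x => ⨆ i, f i x := by
  refine ⟨(hf (Classical.arbitrary ι)).1, fun x hx y hy a b ha hb hab => ciSup_le fun i => ?_⟩
  calc f i (a • x + b • y) ≤ a • f i x + b • f i y := (hf i).2 hx hy ha hb hab
    _ ≤ a • (⨆ i, f i x) + b • ⨆ i, f i y := by
      gcongr
      · exact le_ciSup (hbdd x hx) i
      · exact le_ciSup (hbdd y hy) i

noncomputable def interceptLine (g : ℝ → ℝ) (u t : ℝ) : ℝ := g u * (1 - t / u)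

theorem convexOn_interceptLine (g : ℝ → ℝ) (u : ℝ) : ConvexOn ℝ univ (interceptLine g u) :=
  ⟨convex_univ, fun x _ y _ a b _ _ hab => le_of_eq <| by
    simp only [interceptLine, smul_eq_mul]
    linear_combination (-g u) * hab⟩

noncomputable def supInterceptLines (g : ℝ → ℝ) (t : ℝ) : ℝ :=
  ⨆ u : Ioi (0 : ℝ), interceptLine g u t

section NonnegAntitone

variable {g : ℝ → ℝ}

theorem interceptLine_le (hanti : AntitoneOn g (Ioi 0)) (hnn : ∀ t > 0, 0 ≤ g t) {u t : ℝ}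
    (hu : 0 < u) (ht : 0 < t) : interceptLine g u t ≤ g t := by
  rcases le_or_gt t u with htu | hut
  · calc interceptLine g u t ≤ g u := by
          unfold interceptLine
          have : 0 ≤ t / u := by positivity
          nlinarith [hnn u hu]
      _ ≤ g t := hanti ht hu htu
  · have : 1 - t / u < 0 := by rw [sub_neg, one_lt_div hu]; exact hut
    exact (mul_nonpos_of_nonneg_of_nonpos (hnn u hu) this.le).trans (hnn t ht)

theorem bddAbove_range_interceptLine (hanti : AntitoneOn g (Ioi 0)) (hnn : ∀ t > 0, 0 ≤ g t)
    {t : ℝ} (ht : 0 < t) : BddAbove (range fun u : Ioi (0 : ℝ) => interceptLine g u t) :=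
  ⟨g t, forall_mem_range.2 fun u => interceptLine_le hanti hnn u.2 ht⟩

theorem supInterceptLines_le (hanti : AntitoneOn g (Ioi 0)) (hnn : ∀ t > 0, 0 ≤ g t) {t : ℝ}
    (ht : 0 < t) : supInterceptLines g t ≤ g t :=
  ciSup_le fun u => interceptLine_le hanti hnn u.2 ht

theorem half_le_supInterceptLines (hanti : AntitoneOn g (Ioi 0)) (hnn : ∀ t > 0, 0 ≤ g t)
    {t : ℝ} (ht : 0 < t) : g (2 * t) / 2 ≤ supInterceptLines g t := by
  have hline : interceptLine g (2 * t) t = g (2 * t) / 2 := by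
    unfold interceptLine
    field_simp
    ring
  exact hline ▸
    le_ciSup (bddAbove_range_interceptLine hanti hnn ht) ⟨2 * t, mem_Ioi.2 (by positivity)⟩

theorem supInterceptLines_nonneg (hanti : AntitoneOn g (Ioi 0)) (hnn : ∀ t > 0, 0 ≤ g t)
    {t : ℝ} (ht : 0 < t) : 0 ≤ supInterceptLines g t :=
  (div_nonneg (hnn _ (by positivity)) zero_le_two).trans (half_le_supInterceptLines hanti hnn ht)

theorem convexOn_supInterceptLines (hanti : AntitoneOn g (Ioi 0)) (hnn : ∀ t > 0, 0 ≤ g t) :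
    ConvexOn ℝ (Ioi 0) (supInterceptLines g) :=
  haveI : Nonempty (Ioi (0 : ℝ)) := ⟨⟨1, mem_Ioi.2 one_pos⟩⟩
  ConvexOn.ciSup (fun u => (convexOn_interceptLine g u).subset (subset_univ _) (convex_Ioi 0))
    fun _ ht => bddAbove_range_interceptLine hanti hnn ht

end NonnegAntitone

/-- if a non-decreasing `ω : [0,∞) → [0,∞)` satisfies
`ω(λt) ≤ Cλω(t) + Dλ` for all `λ ≥ 1, t ≥ 0`, then `ω^ι(t) = ω(1/t)` is
equivalent to its largest convex minorant on `(0,∞)`; i.e. there are `A ≥ 1`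
and a nonnegative convex function `h` on `(0,∞)` with
`h(t) ≤ ω(1/t) ≤ A·h(t) + A` for all `t > 0`. -/
theorem stmt_2 (ω : ℝ → ℝ) (hnn : ∀ t, 0 ≤ t → 0 ≤ ω t)
    (hmono : ∀ s t, 0 ≤ s → s ≤ t → ω s ≤ ω t)
    (hα : ∃ C ≥ (1:ℝ), ∃ D ≥ (1:ℝ), ∀ l ≥ (1:ℝ), ∀ t ≥ (0:ℝ),
      ω (l * t) ≤ C * l * ω t + D * l) :
    ∃ A ≥ (1:ℝ), ∃ h : ℝ → ℝ, ConvexOn ℝ (Set.Ioi (0:ℝ)) h ∧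
      (∀ t > (0:ℝ), 0 ≤ h t) ∧
      (∀ t > (0:ℝ), h t ≤ ω (1 / t) ∧ ω (1 / t) ≤ A * h t + A) := by
  obtain ⟨C, hC, D, hD, hscale⟩ := hα
  set g : ℝ → ℝ := fun t => ω (1 / t)
  have hanti : AntitoneOn g (Ioi 0) := fun s hs t ht hst =>
    hmono _ _ (one_div_pos.2 ht).le (one_div_le_one_div_of_le hs hst)
  have hg_nn : ∀ t > 0, 0 ≤ g t := fun t ht => hnn _ (by positivity)
  have hdoubling : ∀ t > 0, g t ≤ 2 * C * g (2 * t) + 2 * D := fun t ht => by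
    have h := hscale 2 one_le_two (1 / (2 * t)) (by positivity)
    rw [show 2 * (1 / (2 * t)) = 1 / t by field_simp] at h
    change ω (1 / t) ≤ 2 * C * ω (1 / (2 * t)) + 2 * D
    linarith
  refine ⟨4 * C + 2 * D, by linarith, supInterceptLines g, convexOn_supInterceptLines hanti hg_nn,
    fun t ht => supInterceptLines_nonneg hanti hg_nn ht,
    fun t ht => ⟨supInterceptLines_le hanti hg_nn ht, ?_⟩⟩
  have hhalf := half_le_supInterceptLines hanti hg_nn ht
  have hh_nn := supInterceptLines_nonneg hanti hg_nn ht
  nlinarith [hdoubling t ht]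
end

section
/- Let ω : [0,∞) → [0,∞) be non-decreasing with lim_{t→∞} ω(t) = +∞. Then: (a) γ(ω) > 1 if and only if ω satisfies (ω_snq); (b) (ω_snq) implies (ω_nq); (c) (ω_nq) implies (ω₅); (d) (ω₅) implies (ω₂); (e) γ(ω) > 1 implies (α₀). -/
open Filter MeasureTheory Asymptotics

/-- Condition `(P_{ω,γ})`: there is `K > 1` with `limsup_{t→∞} ω(K^γ t)/ω(t) < K`,
encoded as: there are `K > 1` and `K' < K` with `ω(K^γ t)/ω(t) ≤ K'` eventually. -/
def Pcond (ω : ℝ → ℝ) (γ : ℝ) : Prop :=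
  ∃ K > (1:ℝ), ∃ K' < K, ∀ᶠ t in atTop, ω (K ^ γ * t) / ω t ≤ K'

/-- The growth index `γ(ω)`, as the supremum (in `ℝ≥0∞`) of all `γ > 0`
satisfying `(P_{ω,γ})`; it is `0` if no such `γ` exists. -/
noncomputable def growthIndex (ω : ℝ → ℝ) : ENNReal :=
  ⨆ γ ∈ {γ : ℝ | 0 < γ ∧ Pcond ω γ}, ENNReal.ofReal γ

/-- Condition (ω_snq). -/
def OmSnq (ω : ℝ → ℝ) : Prop :=
  ∃ C > (0:ℝ), ∀ y > (0:ℝ),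
    (∫⁻ t in Set.Ioi (1:ℝ), ENNReal.ofReal (ω (y * t) / t ^ 2)) ≤
      ENNReal.ofReal (C * ω y + C)

/-- Condition (ω_nq). -/
def OmNq (ω : ℝ → ℝ) : Prop :=
  (∫⁻ t in Set.Ioi (1:ℝ), ENNReal.ofReal (ω t / t ^ 2)) < ⊤

/-- Condition (ω₅): `ω(t) = o(t)` as `t → ∞`. -/
def OmFive (ω : ℝ → ℝ) : Prop := ω =o[atTop] (fun t : ℝ => t)

/-- Condition (ω₂): `ω(t) = O(t)` as `t → ∞`. -/
def OmTwo (ω : ℝ → ℝ) : Prop := ω =O[atTop] (fun t : ℝ => t)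

/-- Condition (α₀). -/
def AlphaZero (ω : ℝ → ℝ) : Prop :=
  ∃ C ≥ (1:ℝ), ∃ t₀ ≥ (0:ℝ), ∀ l ≥ (1:ℝ), ∀ t ≥ t₀, ω (l * t) ≤ C * l * ω t


/-!
Let `σ(y) = ∫₁^∞ ω(yt)/t² dt`. Substituting `t ↦ 2t` gives `σ(2y) = 2 ∫₂^∞ ω(yt)/t² dt`, and the
part of `σ(y)` over `(1, 2]` is at least `ω(y)/4`, so `σ(2y) + ω(y)/2 ≤ 2σ(y)`. Under (ω_snq) and
`ω → ∞`, `σ(y)` is comparable to `ω(y)` for large `y`, so this becomes `σ(2y) ≤ aσ(y)` with `a < 2`;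
iterating, `ω(2ⁿt) ≲ aⁿω(t)`, i.e. `ω(Lt) ≤ Qω(t)` eventually for some `L = 2ⁿ > Q`, which is
exactly what `γ(ω) > 1` amounts to. Conversely, from `ω(Lt) ≤ Qω(t)` with `Q < L`, splitting
`(1, ∞)` into the intervals `(Lⁿ, Lⁿ⁺¹]` bounds `σ(y)` by a geometric series in `Q/L` times `ω(y)`,
and the same iteration gives (α₀). Finally, under (ω_nq) the tail `∫_t^∞ ω(s)/s² ds`, which is at
least `ω(t)/(4t)`, tends to `0`.
-/

open scoped ENNReal
open Set Topology

section

variable {ω : ℝ → ℝ}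

theorem lintegral_comp_mul_left_Ioi (g : ℝ → ℝ≥0∞) (a : ℝ) {b : ℝ} (hb : 0 < b) :
    ∫⁻ x in Ioi a, g (b * x) = ENNReal.ofReal b⁻¹ * ∫⁻ x in Ioi (b * a), g x := by
  have hemb : MeasurableEmbedding (b * · : ℝ → ℝ) :=
    (Homeomorph.mulLeft₀ b hb.ne').isClosedEmbedding.measurableEmbedding
  have hpre : (b * ·) ⁻¹' Ioi (b * a) = Ioi a := by
    ext x; simp [mul_lt_mul_iff_right₀ hb]
  rw [← hpre, ← hemb.lintegral_map, ← hemb.restrict_map, Real.map_volume_mul_left hb.ne',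
    Measure.restrict_smul, lintegral_smul_measure, abs_of_pos (inv_pos.2 hb), smul_eq_mul]

theorem setLIntegral_Ioi_one_eq_tsum_Ioc_pow (f : ℝ → ℝ≥0∞) {L : ℝ} (hL : 1 < L) :
    ∫⁻ t in Ioi 1, f t = ∑' n : ℕ, ∫⁻ t in Ioc (L ^ n) (L ^ (n + 1)), f t := by
  have hunbdd : ¬BddAbove (range (L ^ · : ℕ → ℝ)) := not_bddAbove_iff.2 fun x =>
    let ⟨n, hn⟩ := pow_unbounded_of_one_lt x hL; ⟨L ^ n, mem_range_self n, hn⟩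
  have hunion : ⋃ n : ℕ, Ioc (L ^ n) (L ^ (n + 1)) = Ioi 1 := by
    simpa using iUnion_Ioc_map_succ_eq_Ioi (fun n => one_le_pow₀ hL.le) hunbdd
  rw [← hunion, lintegral_iUnion (fun _ => measurableSet_Ioc)]
  simpa using (pow_right_mono₀ hL.le).pairwise_disjoint_on_Ioc_succ

theorem tendsto_setLIntegral_Ioi_atTop {α : Type*} [MeasurableSpace α] [LinearOrder α]
    [TopologicalSpace α] [OrderClosedTopology α] [OpensMeasurableSpace α]
    [(atTop : Filter α).IsCountablyGenerated] [Nonempty α] {μ : Measure α} {f : α → ℝ≥0∞}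
    (hf : ∫⁻ x, f x ∂μ ≠ ∞) : Tendsto (fun t => ∫⁻ x in Ioi t, f x ∂μ) atTop (𝓝 0) := by
  have hfin : ∃ t, μ.withDensity f (Ioi t) ≠ ∞ := ⟨Classical.arbitrary α, by
    rw [withDensity_apply _ measurableSet_Ioi]
    exact ne_top_of_le_ne_top hf (setLIntegral_le_lintegral _ _)⟩
  have hempty : ⋂ t : α, Ioi t = ∅ := iInter_eq_empty_iff.2 fun x => ⟨x, lt_irrefl x⟩
  have := tendsto_measure_iInter_atTop (fun _ => measurableSet_Ioi.nullMeasurableSet)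
    (fun _ _ h => Ioi_subset_Ioi h) hfin
  simpa [hempty, Function.comp_def, withDensity_apply _ measurableSet_Ioi] using this

theorem le_pow_mul_of_le_mul {f : ℝ → ℝ} {L Q t₀ : ℝ} (hL : 1 ≤ L) (hQ : 0 ≤ Q) (ht₀ : 0 ≤ t₀)
    (h : ∀ t ≥ t₀, f (L * t) ≤ Q * f t) (n : ℕ) {t : ℝ} (ht : t₀ ≤ t) :
    f (L ^ n * t) ≤ Q ^ n * f t := by
  induction n with
  | zero => simp
  | succ n ih =>
    have hLt : t₀ ≤ L ^ n * t := ht.trans (le_mul_of_one_le_left (ht₀.trans ht) (one_le_pow₀ hL))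
    calc f (L ^ (n + 1) * t) = f (L * (L ^ n * t)) := by rw [pow_succ', mul_assoc]
      _ ≤ Q * f (L ^ n * t) := h _ hLt
      _ ≤ Q * (Q ^ n * f t) := mul_le_mul_of_nonneg_left ih hQ
      _ = Q ^ (n + 1) * f t := by ring

theorem exists_dilation_bound_of_one_lt_growthIndex (hpos : ∀ᶠ t in atTop, 0 < ω t)
    (h : 1 < growthIndex ω) :
    ∃ L > 1, ∃ Q ≥ 0, Q < L ∧ ∃ t₀ ≥ 0, ∀ t ≥ t₀, ω (L * t) ≤ Q * ω t := by
  obtain ⟨γ, ⟨-, K, hK, K', hK'K, hratio⟩, hγ⟩ := lt_biSup_iff.1 h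
  have hKL : K ≤ K ^ γ := Real.self_le_rpow_of_one_le hK.le (ENNReal.one_lt_ofReal.1 hγ).le
  obtain ⟨t₀, ht₀⟩ := eventually_atTop.1 (hratio.and hpos)
  refine ⟨K ^ γ, hK.trans_le hKL, max K' 0, le_max_right _ _,
    (max_lt hK'K (by linarith)).trans_le hKL, max t₀ 0, le_max_right _ _, fun t ht => ?_⟩
  obtain ⟨hle, hωt⟩ := ht₀ t (le_of_max_le_left ht)
  calc ω (K ^ γ * t) ≤ K' * ω t := (div_le_iff₀ hωt).1 hle
    _ ≤ max K' 0 * ω t := mul_le_mul_of_nonneg_right (le_max_left _ _) hωt.le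

theorem one_lt_growthIndex_of_dilation_bound (hnn : ∀ᶠ t in atTop, 0 ≤ ω t) {L Q : ℝ}
    (hL : 1 < L) (hQL : Q < L) (h : ∀ᶠ t in atTop, ω (L * t) ≤ Q * ω t) :
    1 < growthIndex ω := by
  set K := (max Q 1 + L) / 2
  have hQK : max Q 1 < K := by have := max_lt hQL hL; simp only [K]; linarith
  have hK1 : 1 < K := (le_max_right Q 1).trans_lt hQK
  have hKL : K < L := by have := max_lt hQL hL; simp only [K]; linarith
  have hγ : 1 < Real.logb K L :=
    (Real.lt_logb_iff_rpow_lt hK1 (by linarith)).2 (by rwa [Real.rpow_one])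
  have hP : Pcond ω (Real.logb K L) := by
    refine ⟨K, hK1, max Q 1, hQK, ?_⟩
    filter_upwards [h, hnn] with t hbound hωt
    rw [Real.rpow_logb (by linarith) hK1.ne' (by linarith)]
    rcases hωt.eq_or_lt with h0 | hpos
    · rw [← h0, div_zero]
      exact zero_le_one.trans (le_max_right _ _)
    · rw [div_le_iff₀ hpos]
      exact hbound.trans (mul_le_mul_of_nonneg_right (le_max_left _ _) hpos.le)
  calc 1 < ENNReal.ofReal (Real.logb K L) := ENNReal.one_lt_ofReal.2 hγ
    _ ≤ growthIndex ω := le_iSup₂ (f := fun γ _ => ENNReal.ofReal γ) _ ⟨by linarith, hP⟩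

theorem alphaZero_of_dilation_bound (hnn : ∀ t, 0 ≤ t → 0 ≤ ω t) (hmono : MonotoneOn ω (Ici 0))
    {L Q t₀ : ℝ} (hL : 1 < L) (hQ : 0 ≤ Q) (hQL : Q ≤ L) (ht₀ : 0 ≤ t₀)
    (h : ∀ t ≥ t₀, ω (L * t) ≤ Q * ω t) : AlphaZero ω := by
  refine ⟨L, hL.le, t₀, ht₀, fun l hl t ht => ?_⟩
  obtain ⟨n, hLn, hlL⟩ := exists_nat_pow_near hl hL
  have ht0 : 0 ≤ t := ht₀.trans ht
  calc ω (l * t) ≤ ω (L ^ (n + 1) * t) :=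
        hmono (mul_nonneg (by linarith) ht0) (mul_nonneg (by positivity) ht0) (by gcongr)
    _ ≤ Q ^ (n + 1) * ω t := le_pow_mul_of_le_mul hL.le hQ ht₀ h (n + 1) ht
    _ ≤ L ^ (n + 1) * ω t := by gcongr; exact hnn t ht0
    _ = L * L ^ n * ω t := by ring
    _ ≤ L * l * ω t := by gcongr; exact hnn t ht0

noncomputable def snqIntegral (ω : ℝ → ℝ) (y : ℝ) : ℝ≥0∞ :=
  ∫⁻ t in Ioi (1:ℝ), ENNReal.ofReal (ω (y * t) / t ^ 2)

theorem snqIntegral_mul (ω : ℝ → ℝ) {a : ℝ} (ha : 0 < a) (y : ℝ) :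
    snqIntegral ω (a * y) =
      ENNReal.ofReal a * ∫⁻ t in Ioi a, ENNReal.ofReal (ω (y * t) / t ^ 2) := by
  have hsubst : ∀ t : ℝ, t ≠ 0 → ENNReal.ofReal (ω (a * y * t) / t ^ 2) =
      ENNReal.ofReal (a ^ 2) * ENNReal.ofReal (ω (y * (a * t)) / (a * t) ^ 2) := by
    intro t ht
    rw [← ENNReal.ofReal_mul (sq_nonneg a)]
    congr 1
    field_simp
  calc snqIntegral ω (a * y)
      = ∫⁻ t in Ioi 1, ENNReal.ofReal (a ^ 2) *
          ENNReal.ofReal (ω (y * (a * t)) / (a * t) ^ 2) :=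
        setLIntegral_congr_fun measurableSet_Ioi fun t (ht : 1 < t) => hsubst t (by positivity)
    _ = ENNReal.ofReal a⁻¹ * (ENNReal.ofReal (a ^ 2) *
          ∫⁻ t in Ioi a, ENNReal.ofReal (ω (y * t) / t ^ 2)) := by
        have := lintegral_comp_mul_left_Ioi
          (fun s => ENNReal.ofReal (a ^ 2) * ENNReal.ofReal (ω (y * s) / s ^ 2)) 1 ha
        rw [this, mul_one, lintegral_const_mul' _ _ ENNReal.ofReal_ne_top]
    _ = ENNReal.ofReal a * ∫⁻ t in Ioi a, ENNReal.ofReal (ω (y * t) / t ^ 2) := by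
        rw [← mul_assoc, ← ENNReal.ofReal_mul (by positivity)]
        congr 2
        field_simp

theorem snqIntegral_mono (hmono : MonotoneOn ω (Ici 0)) {y z : ℝ} (hy : 0 ≤ y) (hyz : y ≤ z) :
    snqIntegral ω y ≤ snqIntegral ω z :=
  setLIntegral_mono' measurableSet_Ioi fun t (ht : 1 < t) => by
    have ht0 : 0 ≤ t := by linarith
    gcongr
    exact hmono (mul_nonneg hy ht0) (mul_nonneg (hy.trans hyz) ht0) (by gcongr)

theorem ofReal_le_setLIntegral_Ioc (hnn : ∀ t, 0 ≤ t → 0 ≤ ω t) (hmono : MonotoneOn ω (Ici 0))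
    {y a b : ℝ} (hy : 0 ≤ y) (ha : 0 ≤ a) :
    ENNReal.ofReal (ω (y * a) * (b - a) / b ^ 2) ≤
      ∫⁻ t in Ioc a b, ENNReal.ofReal (ω (y * t) / t ^ 2) := by
  calc ENNReal.ofReal (ω (y * a) * (b - a) / b ^ 2)
      = ∫⁻ _ in Ioc a b, ENNReal.ofReal (ω (y * a) / b ^ 2) := by
        rw [setLIntegral_const, Real.volume_Ioc, ← ENNReal.ofReal_mul
          (div_nonneg (hnn _ (mul_nonneg hy ha)) (sq_nonneg b)), div_mul_eq_mul_div]
    _ ≤ ∫⁻ t in Ioc a b, ENNReal.ofReal (ω (y * t) / t ^ 2) :=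
        setLIntegral_mono' measurableSet_Ioc fun t ⟨hat, htb⟩ => by
          have ht0 : 0 < t := ha.trans_lt hat
          refine ENNReal.ofReal_le_ofReal (div_le_div₀ (hnn _ (by positivity)) ?_ (by positivity)
            (by gcongr))
          exact hmono (mul_nonneg hy ha) (mul_nonneg hy ht0.le) (by gcongr)

theorem setLIntegral_Ioc_le_ofReal (hnn : ∀ t, 0 ≤ t → 0 ≤ ω t) (hmono : MonotoneOn ω (Ici 0))
    {y a b : ℝ} (hy : 0 ≤ y) (ha : 0 < a) (hab : a ≤ b) :
    ∫⁻ t in Ioc a b, ENNReal.ofReal (ω (y * t) / t ^ 2) ≤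
      ENNReal.ofReal (ω (y * b) * (b - a) / a ^ 2) := by
  have hyb : 0 ≤ y * b := mul_nonneg hy (ha.le.trans hab)
  calc ∫⁻ t in Ioc a b, ENNReal.ofReal (ω (y * t) / t ^ 2)
      ≤ ∫⁻ _ in Ioc a b, ENNReal.ofReal (ω (y * b) / a ^ 2) :=
        setLIntegral_mono' measurableSet_Ioc fun t ⟨hat, htb⟩ => by
          have ht0 : 0 < t := ha.trans hat
          refine ENNReal.ofReal_le_ofReal (div_le_div₀ (hnn _ hyb) ?_ (by positivity) (by gcongr))
          exact hmono (mul_nonneg hy ht0.le) hyb (by gcongr)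
    _ = ENNReal.ofReal (ω (y * b) * (b - a) / a ^ 2) := by
        rw [setLIntegral_const, Real.volume_Ioc, ← ENNReal.ofReal_mul
          (div_nonneg (hnn _ hyb) (sq_nonneg a)), div_mul_eq_mul_div]

theorem ofReal_div_four_le_setLIntegral_Ioc_one_two (hnn : ∀ t, 0 ≤ t → 0 ≤ ω t)
    (hmono : MonotoneOn ω (Ici 0)) {y : ℝ} (hy : 0 ≤ y) :
    ENNReal.ofReal (ω y / 4) ≤ ∫⁻ t in Ioc 1 2, ENNReal.ofReal (ω (y * t) / t ^ 2) := by
  convert ofReal_le_setLIntegral_Ioc hnn hmono hy zero_le_one (b := 2) using 2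
  norm_num

theorem ofReal_div_four_le_snqIntegral (hnn : ∀ t, 0 ≤ t → 0 ≤ ω t)
    (hmono : MonotoneOn ω (Ici 0)) {y : ℝ} (hy : 0 ≤ y) :
    ENNReal.ofReal (ω y / 4) ≤ snqIntegral ω y :=
  (ofReal_div_four_le_setLIntegral_Ioc_one_two hnn hmono hy).trans
    (lintegral_mono_set Ioc_subset_Ioi_self)

theorem snqIntegral_two_mul_add_le (hnn : ∀ t, 0 ≤ t → 0 ≤ ω t) (hmono : MonotoneOn ω (Ici 0))
    {y : ℝ} (hy : 0 ≤ y) :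
    snqIntegral ω (2 * y) + ENNReal.ofReal (ω y / 2) ≤ 2 * snqIntegral ω y := by
  have hhalf : ENNReal.ofReal (ω y / 2) = 2 * ENNReal.ofReal (ω y / 4) := by
    rw [← ENNReal.ofReal_ofNat 2, ← ENNReal.ofReal_mul zero_le_two]
    ring_nf
  rw [snqIntegral_mul ω two_pos, ENNReal.ofReal_ofNat, hhalf, snqIntegral,
    ← Ioc_union_Ioi_eq_Ioi one_le_two, lintegral_union measurableSet_Ioi Ioc_disjoint_Ioi_same]
  grw [ofReal_div_four_le_setLIntegral_Ioc_one_two hnn hmono hy]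
  ring_nf
  exact le_rfl

theorem snqIntegral_le_of_dilation_bound (hnn : ∀ t, 0 ≤ t → 0 ≤ ω t)
    (hmono : MonotoneOn ω (Ici 0)) {L Q t₀ : ℝ} (hL : 1 < L) (hQ : 0 ≤ Q) (hQL : Q < L)
    (ht₀ : 0 ≤ t₀) (h : ∀ t ≥ t₀, ω (L * t) ≤ Q * ω t) {y : ℝ} (hy : t₀ ≤ y) :
    snqIntegral ω y ≤ ENNReal.ofReal (Q * (L - 1) * L / (L - Q) * ω y) := by
  have hy0 : 0 ≤ y := ht₀.trans hy
  have hr : 0 ≤ Q / L := by positivity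
  have hr1 : Q / L < 1 := (div_lt_one (by linarith)).2 hQL
  have hc : 0 ≤ Q * (L - 1) * ω y := mul_nonneg (mul_nonneg hQ (by linarith)) (hnn y hy0)
  have hpiece (n : ℕ) : ∫⁻ t in Ioc (L ^ n) (L ^ (n + 1)), ENNReal.ofReal (ω (y * t) / t ^ 2) ≤
      ENNReal.ofReal (Q * (L - 1) * ω y) * ENNReal.ofReal (Q / L) ^ n := by
    refine (setLIntegral_Ioc_le_ofReal hnn hmono hy0 (by positivity)
      (pow_le_pow_right₀ hL.le n.le_succ)).trans ?_
    rw [← ENNReal.ofReal_pow hr, ← ENNReal.ofReal_mul hc]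
    apply ENNReal.ofReal_le_ofReal
    have hLn : 0 < L ^ n := by positivity
    calc ω (y * L ^ (n + 1)) * (L ^ (n + 1) - L ^ n) / (L ^ n) ^ 2
        = ω (L ^ (n + 1) * y) * ((L - 1) / L ^ n) := by
          rw [mul_comm y, pow_succ]; field_simp
      _ ≤ Q ^ (n + 1) * ω y * ((L - 1) / L ^ n) := by
          gcongr
          exact le_pow_mul_of_le_mul hL.le hQ ht₀ h (n + 1) hy
      _ = Q * (L - 1) * ω y * (Q / L) ^ n := by
          rw [div_pow, pow_succ]; field_simp
  calc snqIntegral ω y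
      = ∑' n : ℕ, ∫⁻ t in Ioc (L ^ n) (L ^ (n + 1)), ENNReal.ofReal (ω (y * t) / t ^ 2) :=
        setLIntegral_Ioi_one_eq_tsum_Ioc_pow _ hL
    _ ≤ ∑' n : ℕ, ENNReal.ofReal (Q * (L - 1) * ω y) * ENNReal.ofReal (Q / L) ^ n :=
        ENNReal.tsum_le_tsum hpiece
    _ = ENNReal.ofReal (Q * (L - 1) * ω y) * ENNReal.ofReal (1 - Q / L)⁻¹ := by
        rw [ENNReal.tsum_mul_left, ENNReal.tsum_geometric, ← ENNReal.ofReal_one,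
          ← ENNReal.ofReal_sub _ hr, ENNReal.ofReal_inv_of_pos (by linarith)]
    _ = ENNReal.ofReal (Q * (L - 1) * L / (L - Q) * ω y) := by
        rw [← ENNReal.ofReal_mul hc]
        congr 1
        have : L - Q ≠ 0 := by linarith
        field_simp

theorem omSnq_of_snqIntegral_le (hnn : ∀ t, 0 ≤ t → 0 ≤ ω t) (hmono : MonotoneOn ω (Ici 0))
    {D t₀ : ℝ} (hD : 0 ≤ D) (ht₀ : 0 ≤ t₀)
    (h : ∀ y ≥ t₀, snqIntegral ω y ≤ ENNReal.ofReal (D * ω y)) : OmSnq ω := by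
  have hωt₀ := hnn t₀ ht₀
  refine ⟨D * ω t₀ + D + 1, by positivity, fun y hy => ?_⟩
  have hωy := hnn y hy.le
  rcases le_total t₀ y with hty | hyt
  · exact (h y hty).trans
      (ENNReal.ofReal_le_ofReal (by nlinarith [mul_nonneg (mul_nonneg hD hωt₀) hωy]))
  · exact (snqIntegral_mono hmono hy.le hyt).trans ((h t₀ le_rfl).trans
      (ENNReal.ofReal_le_ofReal (by nlinarith [mul_nonneg (mul_nonneg hD hωt₀) hωy])))

theorem toReal_snqIntegral_two_mul_le (hnn : ∀ t, 0 ≤ t → 0 ≤ ω t)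
    (hmono : MonotoneOn ω (Ici 0)) {y M : ℝ} (hy : 0 ≤ y) (hM : 0 < M)
    (h : snqIntegral ω y ≤ ENNReal.ofReal (M * ω y)) :
    (snqIntegral ω (2 * y)).toReal ≤ (2 - 1 / (2 * M)) * (snqIntegral ω y).toReal := by
  have hωy := hnn y hy
  have hfin : 2 * snqIntegral ω y ≠ ⊤ :=
    ENNReal.mul_ne_top ENNReal.ofNat_ne_top (ne_top_of_le_ne_top ENNReal.ofReal_ne_top h)
  have hdouble := snqIntegral_two_mul_add_le hnn hmono hy
  have hfin2 : snqIntegral ω (2 * y) ≠ ⊤ := ne_top_of_le_ne_top hfin (le_self_add.trans hdouble)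
  have hreal := ENNReal.toReal_mono hfin hdouble
  rw [ENNReal.toReal_add hfin2 ENNReal.ofReal_ne_top, ENNReal.toReal_ofReal (by positivity),
    ENNReal.toReal_mul, ENNReal.toReal_ofNat] at hreal
  have hupper : (snqIntegral ω y).toReal / (2 * M) ≤ ω y / 2 := by
    rw [div_le_iff₀ (by positivity)]
    nlinarith [ENNReal.toReal_le_of_le_ofReal (by positivity) h]
  have : (2 - 1 / (2 * M)) * (snqIntegral ω y).toReal =
      2 * (snqIntegral ω y).toReal - (snqIntegral ω y).toReal / (2 * M) := by ring
  linarith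

theorem exists_dilation_bound_of_doubling {f g : ℝ → ℝ} {a M t₀ : ℝ} (ha : 0 ≤ a) (ha2 : a < 2)
    (hM : 0 < M) (ht₀ : 0 ≤ t₀) (hgf : ∀ t ≥ t₀, g t ≤ f t) (hfg : ∀ t ≥ t₀, f t ≤ M * g t)
    (hf : ∀ t ≥ t₀, f (2 * t) ≤ a * f t) :
    ∃ L > 1, ∃ Q < L, ∀ᶠ t in atTop, g (L * t) ≤ Q * g t := by
  have hsmall := (tendsto_pow_atTop_nhds_zero_of_lt_one (by positivity) (by linarith : a / 2 < 1))
    |>.eventually (gt_mem_nhds (inv_pos.2 hM))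
  obtain ⟨n, hn, hn1⟩ := (hsmall.and (eventually_ge_atTop 1)).exists
  have h2n : 1 < (2:ℝ) ^ n := one_lt_pow₀ one_lt_two (by omega)
  refine ⟨2 ^ n, h2n, M * a ^ n, ?_, eventually_atTop.2 ⟨t₀, fun t ht => ?_⟩⟩
  · calc M * a ^ n = M * (a / 2) ^ n * 2 ^ n := by rw [div_pow]; field_simp
      _ < M * M⁻¹ * 2 ^ n := by gcongr
      _ = 2 ^ n := by field_simp
  · have h2nt : t₀ ≤ 2 ^ n * t := ht.trans (le_mul_of_one_le_left (ht₀.trans ht) h2n.le)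
    calc g (2 ^ n * t) ≤ f (2 ^ n * t) := hgf _ h2nt
      _ ≤ a ^ n * f t := le_pow_mul_of_le_mul one_le_two ha ht₀ hf n ht
      _ ≤ a ^ n * (M * g t) := by gcongr; exact hfg t ht
      _ = M * a ^ n * g t := by ring

theorem exists_dilation_bound_of_omSnq (hnn : ∀ t, 0 ≤ t → 0 ≤ ω t)
    (hmono : MonotoneOn ω (Ici 0)) (hlim : Tendsto ω atTop atTop) (h : OmSnq ω) :
    ∃ L > 1, ∃ Q < L, ∀ᶠ t in atTop, ω (L * t) ≤ Q * ω t := by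
  obtain ⟨C, -, hsnq⟩ := h
  obtain ⟨t₀, ht₀⟩ :=
    eventually_atTop.1 ((hlim.eventually_ge_atTop 1).and (eventually_gt_atTop 0))
  have ht₀0 : 0 < t₀ := (ht₀ t₀ le_rfl).2
  -- Enlarging `C` to `C' ≥ 1` makes the contraction factor `2 - 1 / (4 C')` nonnegative.
  set C' := max C 1
  have hupper : ∀ y ≥ t₀, snqIntegral ω y ≤ ENNReal.ofReal (2 * C' * ω y) := fun y hy =>
    (hsnq y (ht₀ y hy).2).trans <| ENNReal.ofReal_le_ofReal <| by
      nlinarith [(ht₀ y hy).1, le_max_left C 1, le_max_right C 1]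
  have hfin : ∀ y ≥ t₀, snqIntegral ω y ≠ ⊤ := fun y hy =>
    ne_top_of_le_ne_top ENNReal.ofReal_ne_top (hupper y hy)
  refine exists_dilation_bound_of_doubling (f := fun y => 4 * (snqIntegral ω y).toReal)
    (a := 2 - 1 / (2 * (2 * C'))) (M := 8 * C') ?_ ?_ (by positivity) ht₀0.le
    (fun y hy => ?_) (fun y hy => ?_) (fun y hy => ?_)
  · have : 1 / (2 * (2 * C')) ≤ 1 / 4 := by gcongr; linarith [le_max_right C 1]
    linarith
  · have : 0 < 1 / (2 * (2 * C')) := by positivity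
    linarith
  · have := (ENNReal.ofReal_le_iff_le_toReal (hfin y hy)).1
      (ofReal_div_four_le_snqIntegral hnn hmono (ht₀0.le.trans hy))
    linarith
  · have := ENNReal.toReal_le_of_le_ofReal
      (by nlinarith [(ht₀ y hy).1, le_max_right C 1]) (hupper y hy)
    linarith
  · have := toReal_snqIntegral_two_mul_le hnn hmono (ht₀0.le.trans hy) (by positivity)
      (hupper y hy)
    linarith

theorem omNq_of_omSnq (h : OmSnq ω) : OmNq ω := by
  obtain ⟨C, -, hC⟩ := h
  have := (hC 1 one_pos).trans_lt ENNReal.ofReal_lt_top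
  simp only [one_mul] at this
  exact this

theorem omFive_of_omNq (hnn : ∀ t, 0 ≤ t → 0 ≤ ω t) (hmono : MonotoneOn ω (Ici 0))
    (h : OmNq ω) : OmFive ω := by
  have htail : Tendsto (fun t => ∫⁻ x in Ioi t, ENNReal.ofReal (ω x / x ^ 2)) atTop (𝓝 0) := by
    refine (tendsto_setLIntegral_Ioi_atTop (μ := volume.restrict (Ioi 1)) h.ne).congr' ?_
    filter_upwards [eventually_ge_atTop 1] with t ht
    rw [Measure.restrict_restrict measurableSet_Ioi,
      inter_eq_self_of_subset_left (Ioi_subset_Ioi ht)]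
  have hlower : ∀ᶠ t in atTop,
      ENNReal.ofReal (ω t / t / 4) ≤ ∫⁻ x in Ioi t, ENNReal.ofReal (ω x / x ^ 2) := by
    filter_upwards [eventually_gt_atTop 0] with t ht
    have := ofReal_le_setLIntegral_Ioc hnn hmono zero_le_one ht.le (b := 2 * t)
    simp only [one_mul] at this
    calc ENNReal.ofReal (ω t / t / 4) = ENNReal.ofReal (ω t * (2 * t - t) / (2 * t) ^ 2) := by
          congr 1; field_simp; ring
      _ ≤ _ := this.trans (lintegral_mono_set Ioc_subset_Ioi_self)
  have hquarter : Tendsto (fun t => ENNReal.ofReal (ω t / t / 4)) atTop (𝓝 0) :=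
    tendsto_of_tendsto_of_tendsto_of_le_of_le' tendsto_const_nhds htail
      (.of_forall fun _ => zero_le) hlower
  have hratio : Tendsto (fun t => ω t / t / 4) atTop (𝓝 0) := by
    refine ((ENNReal.tendsto_toReal ENNReal.zero_ne_top).comp hquarter).congr' ?_
    filter_upwards [eventually_gt_atTop 0] with t ht
    exact ENNReal.toReal_ofReal (by have := hnn t ht.le; positivity)
  rw [OmFive, isLittleO_iff_tendsto' ((eventually_ne_atTop 0).mono fun t ht h0 => (ht h0).elim)]
  simpa [mul_div_cancel₀] using hratio.const_mul 4

end

/-- chain of implications between the growth index and the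
conditions (ω_snq), (ω_nq), (ω₅), (ω₂), (α₀). -/
theorem stmt_3 (ω : ℝ → ℝ) (hnn : ∀ t, 0 ≤ t → 0 ≤ ω t)
    (hmono : ∀ s t, 0 ≤ s → s ≤ t → ω s ≤ ω t)
    (hlim : Tendsto ω atTop atTop) :
    (1 < growthIndex ω ↔ OmSnq ω) ∧
    (OmSnq ω → OmNq ω) ∧
    (OmNq ω → OmFive ω) ∧
    (OmFive ω → OmTwo ω) ∧
    (1 < growthIndex ω → AlphaZero ω) := by
  have hmono' : MonotoneOn ω (Ici 0) := fun s hs t _ hst => hmono s t hs hst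
  have hpos : ∀ᶠ t in atTop, 0 < ω t := hlim.eventually_gt_atTop 0
  refine ⟨⟨fun h => ?_, fun h => ?_⟩, omNq_of_omSnq, omFive_of_omNq hnn hmono',
    fun h => h.isBigO, fun h => ?_⟩
  · obtain ⟨L, hL, Q, hQ, hQL, t₀, ht₀, hbound⟩ := exists_dilation_bound_of_one_lt_growthIndex hpos h
    exact omSnq_of_snqIntegral_le hnn hmono' (by positivity) ht₀
      fun y hy => snqIntegral_le_of_dilation_bound hnn hmono' hL hQ hQL ht₀ hbound hy
  · obtain ⟨L, hL, Q, hQL, hbound⟩ := exists_dilation_bound_of_omSnq hnn hmono' hlim h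
    exact one_lt_growthIndex_of_dilation_bound (hpos.mono fun _ => le_of_lt) hL hQL hbound
  · obtain ⟨L, hL, Q, hQ, hQL, t₀, ht₀, hbound⟩ := exists_dilation_bound_of_one_lt_growthIndex hpos h
    exact alphaZero_of_dilation_bound hnn hmono' hL hQ hQL.le ht₀ hbound
end

section
/- Let W = (ω^ℓ)_{ℓ>0} be a continuous weight function matrix on ℝ^d and let 1 ≤ p < ∞. Then: (a) there exists ℓ₀ > 0 with sup_{x∈ℝ^d} ω^{ℓ₀}(x) < ∞ if and only if L^p(ℝ^d) ⊆ L^p_{{W}} (equivalently L^p(ℝ^d) = L^p_{{W}} as sets); (b) sup_{x∈ℝ^d} ω^ℓ(x) < ∞ for every ℓ > 0 if and only if L^p(ℝ^d) ⊆ L^p_{(W)} (equivalently L^p(ℝ^d) = L^p_{(W)} as sets). -/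
/-!
If every weight `ω^ℓ` is unbounded, choose for each `k` a small open set on which
`ω^{1/(k+1)}` exceeds `log 4^k`, and let `|f|^p` put mass `2^{-k}` uniformly on it. Then
`f ∈ L^p`, while for `ℓ ≥ 1/(k+1)` the `k`-th piece contributes at least `2^k` to
`∫ |f|^p e^{ω^ℓ}`, so no weight makes it finite. Bounded weights trivially preserve `L^p`.
-/

open MeasureTheory

/-- The `p`-th power of the weighted `L^p`-norm:
`∫_{ℝ^d} |f(x)|^p · e^{ω(x)} dx` (with values in `ℝ≥0∞`). -/
noncomputable def wintP {d : ℕ} (p : ℝ) (ω : EuclideanSpace ℝ (Fin d) → ℝ)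
    (f : EuclideanSpace ℝ (Fin d) → ℂ) : ENNReal :=
  ∫⁻ x, ENNReal.ofReal (‖f x‖ ^ p * Real.exp (ω x))

open Set Filter Topology
open scoped ENNReal

section WeightedMass

variable {X : Type*} [MeasurableSpace X]

lemma exists_isOpen_subset_measure_pos_lt_top [TopologicalSpace X] (μ : Measure X)
    [μ.IsOpenPosMeasure] [IsLocallyFiniteMeasure μ] {U : Set X} (hU : IsOpen U)
    (hne : U.Nonempty) : ∃ V ⊆ U, IsOpen V ∧ μ V ≠ 0 ∧ μ V ≠ ∞ := by
  obtain ⟨x, hx⟩ := hne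
  obtain ⟨s, hxs, hs, hμs⟩ := μ.exists_isOpen_measure_lt_top x
  exact ⟨s ∩ U, inter_subset_right, hs.inter hU,
    ((hs.inter hU).measure_pos μ ⟨x, hxs, hx⟩).ne', ((measure_mono inter_subset_left).trans_lt hμs).ne⟩

lemma exists_lintegral_lt_top_forall_le_setLIntegral {μ : Measure X} {V : ℕ → Set X}
    (hV : ∀ k, MeasurableSet (V k)) (hpos : ∀ k, μ (V k) ≠ 0) (hfin : ∀ k, μ (V k) ≠ ∞) :
    ∃ G : X → ℝ≥0∞, Measurable G ∧ ∫⁻ x, G x ∂μ < ∞ ∧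
      ∀ k, 2⁻¹ ^ k ≤ ∫⁻ x in V k, G x ∂μ := by
  set c : ℕ → ℝ≥0∞ := fun k => 2⁻¹ ^ k / μ (V k)
  have hc : ∀ k, c k * μ (V k) = 2⁻¹ ^ k := fun k => ENNReal.div_mul_cancel (hpos k) (hfin k)
  have hmeas : ∀ k, Measurable ((V k).indicator fun _ => c k) :=
    fun k => measurable_const.indicator (hV k)
  refine ⟨fun x => ∑' k, (V k).indicator (fun _ => c k) x,
    Measurable.tsum hmeas, ?_, fun k => ?_⟩
  · rw [lintegral_tsum fun k => (hmeas k).aemeasurable]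
    simp [lintegral_indicator_const (hV _), hc, ENNReal.tsum_geometric, ENNReal.one_sub_inv_two]
  · calc 2⁻¹ ^ k = ∫⁻ _ in V k, c k ∂μ := by rw [setLIntegral_const, hc]
      _ ≤ ∫⁻ x in V k, ∑' j, (V j).indicator (fun _ => c j) x ∂μ := by
        refine setLIntegral_mono' (hV k) fun x hx => ?_
        exact (indicator_of_mem hx (fun _ => c k)).symm.le.trans
          (ENNReal.le_tsum (f := fun j => (V j).indicator (fun _ => c j) x) k)

lemma exists_lintegral_lt_top_forall_le_setLIntegral_of_isOpen [TopologicalSpace X]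
    [OpensMeasurableSpace X] (μ : Measure X) [μ.IsOpenPosMeasure] [IsLocallyFiniteMeasure μ]
    {U : ℕ → Set X} (hU : ∀ k, IsOpen (U k)) (hne : ∀ k, (U k).Nonempty) :
    ∃ G : X → ℝ≥0∞, Measurable G ∧ ∫⁻ x, G x ∂μ < ∞ ∧
      ∀ k, 2⁻¹ ^ k ≤ ∫⁻ x in U k, G x ∂μ := by
  choose V hVU hV hpos hfin using
    fun k => exists_isOpen_subset_measure_pos_lt_top μ (hU k) (hne k)
  obtain ⟨G, hG, hGint, hGV⟩ :=
    exists_lintegral_lt_top_forall_le_setLIntegral (fun k => (hV k).measurableSet) hpos hfin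
  exact ⟨G, hG, hGint, fun k => (hGV k).trans (lintegral_mono_set (hVU k))⟩

theorem exists_lintegral_lt_top_forall_lintegral_mul_exp_eq_top [TopologicalSpace X]
    [OpensMeasurableSpace X] (μ : Measure X) [μ.IsOpenPosMeasure] [IsLocallyFiniteMeasure μ]
    {ω : ℕ → X → ℝ} (hω : ∀ k, LowerSemicontinuous (ω k)) (hanti : Antitone ω)
    (hunb : ∀ k (M : ℝ), ∃ x, M < ω k x) :
    ∃ G : X → ℝ≥0∞, Measurable G ∧ ∫⁻ x, G x ∂μ < ∞ ∧
      ∀ m, ∫⁻ x, G x * ENNReal.ofReal (Real.exp (ω m x)) ∂μ = ∞ := by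
  set U : ℕ → Set X := fun k => ω k ⁻¹' Ioi (Real.log (4 ^ k))
  obtain ⟨G, hG, hGint, hGU⟩ := exists_lintegral_lt_top_forall_le_setLIntegral_of_isOpen μ
    (U := U) (fun k => (hω k).isOpen_preimage _) (fun k => hunb k _)
  refine ⟨G, hG, hGint, fun m => top_unique ?_⟩
  have hlarge : ∀ k ≥ m, 2 ^ k ≤ ∫⁻ x, G x * ENNReal.ofReal (Real.exp (ω m x)) ∂μ := by
    intro k hk
    have hexp : ∀ x ∈ U k, (4 : ℝ≥0∞) ^ k ≤ ENNReal.ofReal (Real.exp (ω m x)) := fun x hx => by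
      calc (4 : ℝ≥0∞) ^ k = ENNReal.ofReal (Real.exp (Real.log (4 ^ k))) := by
            rw [Real.exp_log (by positivity), ENNReal.ofReal_pow (by norm_num)]; norm_num
        _ ≤ ENNReal.ofReal (Real.exp (ω m x)) :=
            ENNReal.ofReal_le_ofReal (Real.exp_le_exp.2 ((le_of_lt hx).trans (hanti hk x)))
    calc (2 : ℝ≥0∞) ^ k = 4 ^ k * 2⁻¹ ^ k := by
          rw [← mul_pow]; congr 1; rw [show (4 : ℝ≥0∞) = 2 * 2 by norm_num,
            mul_assoc, ENNReal.mul_inv_cancel two_ne_zero ENNReal.ofNat_ne_top, mul_one]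
      _ ≤ 4 ^ k * ∫⁻ x in U k, G x ∂μ := by gcongr; exact hGU k
      _ = ∫⁻ x in U k, 4 ^ k * G x ∂μ := (lintegral_const_mul _ hG).symm
      _ ≤ ∫⁻ x in U k, G x * ENNReal.ofReal (Real.exp (ω m x)) ∂μ := by
        refine setLIntegral_mono' ((hω k).isOpen_preimage _).measurableSet fun x hx => ?_
        rw [mul_comm]; gcongr; exact hexp x hx
      _ ≤ _ := setLIntegral_le_lintegral _ _
  exact le_of_tendsto (ENNReal.tendsto_pow_atTop_nhds_top_iff.2 ENNReal.one_lt_two)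
    (eventually_atTop.2 ⟨m, hlarge⟩)

end WeightedMass

section Weighted

variable {d : ℕ} {p : ℝ}

lemma wintP_eq_lintegral_enorm_rpow_mul (hp : 0 ≤ p) (ω : EuclideanSpace ℝ (Fin d) → ℝ)
    (f : EuclideanSpace ℝ (Fin d) → ℂ) :
    wintP p ω f = ∫⁻ x, ‖f x‖ₑ ^ p * ENNReal.ofReal (Real.exp (ω x)) := by
  refine lintegral_congr fun x => ?_
  rw [ENNReal.ofReal_mul (by positivity), ← ofReal_norm,
    ENNReal.ofReal_rpow_of_nonneg (norm_nonneg _) hp]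

lemma memLp_iff_wintP_zero_lt_top (hp : 0 < p) {f : EuclideanSpace ℝ (Fin d) → ℂ} :
    MemLp f (ENNReal.ofReal p) volume ↔ AEStronglyMeasurable f volume ∧ wintP p 0 f < ∞ := by
  rw [MemLp, eLpNorm_lt_top_iff_lintegral_rpow_enorm_lt_top (by simpa using hp)
    ENNReal.ofReal_ne_top, wintP_eq_lintegral_enorm_rpow_mul hp.le, ENNReal.toReal_ofReal hp.le]
  simp

lemma wintP_mono {ω₁ ω₂ : EuclideanSpace ℝ (Fin d) → ℝ} (h : ∀ x, ω₁ x ≤ ω₂ x)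
    (f : EuclideanSpace ℝ (Fin d) → ℂ) : wintP p ω₁ f ≤ wintP p ω₂ f :=
  lintegral_mono fun x => ENNReal.ofReal_le_ofReal <|
    mul_le_mul_of_nonneg_left (Real.exp_le_exp.2 (h x)) (Real.rpow_nonneg (norm_nonneg _) p)

lemma wintP_le_exp_mul_wintP_zero {ω : EuclideanSpace ℝ (Fin d) → ℝ} {M : ℝ}
    (hM : ∀ x, ω x ≤ M) (f : EuclideanSpace ℝ (Fin d) → ℂ) :
    wintP p ω f ≤ ENNReal.ofReal (Real.exp M) * wintP p 0 f := by
  rw [wintP, wintP, ← lintegral_const_mul' _ _ ENNReal.ofReal_ne_top]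
  refine lintegral_mono fun x => ?_
  rw [← ENNReal.ofReal_mul (Real.exp_pos M).le, Pi.zero_apply, Real.exp_zero, mul_one, mul_comm]
  exact ENNReal.ofReal_le_ofReal <|
    mul_le_mul_of_nonneg_right (Real.exp_le_exp.2 (hM x)) (Real.rpow_nonneg (norm_nonneg _) p)

lemma wintP_lt_top_of_le (hp : 0 < p) {f : EuclideanSpace ℝ (Fin d) → ℂ}
    (hf : MemLp f (ENNReal.ofReal p) volume) {ω : EuclideanSpace ℝ (Fin d) → ℝ} {M : ℝ}
    (hM : ∀ x, ω x ≤ M) : wintP p ω f < ∞ :=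
  (wintP_le_exp_mul_wintP_zero hM f).trans_lt <|
    ENNReal.mul_lt_top ENNReal.ofReal_lt_top ((memLp_iff_wintP_zero_lt_top hp).1 hf).2

lemma exists_memLp_wintP_eq_lintegral_mul (hp : 0 < p) {G : EuclideanSpace ℝ (Fin d) → ℝ≥0∞}
    (hG : Measurable G) (hGint : ∫⁻ x, G x < ∞) :
    ∃ f : EuclideanSpace ℝ (Fin d) → ℂ, MemLp f (ENNReal.ofReal p) volume ∧
      ∀ ω, wintP p ω f = ∫⁻ x, G x * ENNReal.ofReal (Real.exp (ω x)) := by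
  set f : EuclideanSpace ℝ (Fin d) → ℂ := fun x => ((G x).toReal ^ p⁻¹ : ℝ)
  have hwintP : ∀ ω, wintP p ω f = ∫⁻ x, G x * ENNReal.ofReal (Real.exp (ω x)) := by
    intro ω
    rw [wintP_eq_lintegral_enorm_rpow_mul hp.le]
    refine lintegral_congr_ae ?_
    filter_upwards [ae_lt_top hG hGint.ne] with x hx
    rw [← ofReal_norm, Complex.norm_real, Real.norm_of_nonneg (by positivity),
      ENNReal.ofReal_rpow_of_nonneg (by positivity) hp.le,
      Real.rpow_inv_rpow ENNReal.toReal_nonneg hp.ne', ENNReal.ofReal_toReal hx.ne]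
  refine ⟨f, (memLp_iff_wintP_zero_lt_top hp).2 ⟨?_, ?_⟩, hwintP⟩
  · exact (Complex.measurable_ofReal.comp
      (hG.ennreal_toReal.pow_const _)).aestronglyMeasurable
  · simpa [hwintP] using hGint

theorem exists_memLp_forall_wintP_eq_top (hp : 0 < p) {ω : ℕ → EuclideanSpace ℝ (Fin d) → ℝ}
    (hω : ∀ k, LowerSemicontinuous (ω k)) (hanti : Antitone ω)
    (hunb : ∀ k (M : ℝ), ∃ x, M < ω k x) :
    ∃ f : EuclideanSpace ℝ (Fin d) → ℂ, MemLp f (ENNReal.ofReal p) volume ∧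
      ∀ m, wintP p (ω m) f = ∞ := by
  obtain ⟨G, hG, hGint, hGtop⟩ :=
    exists_lintegral_lt_top_forall_lintegral_mul_exp_eq_top volume hω hanti hunb
  obtain ⟨f, hf, hwintP⟩ := exists_memLp_wintP_eq_lintegral_mul hp hG hGint
  exact ⟨f, hf, fun m => (hwintP _).trans (hGtop m)⟩

theorem exists_bounded_weight_iff_memLp_subset_roumieu (hp : 0 < p)
    (W : ℝ → EuclideanSpace ℝ (Fin d) → ℝ)
    (hWmono : ∀ ℓ₁ ℓ₂ : ℝ, 0 < ℓ₁ → ℓ₁ ≤ ℓ₂ → ∀ x, W ℓ₁ x ≤ W ℓ₂ x)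
    (hWlsc : ∀ ℓ > (0:ℝ), LowerSemicontinuous (W ℓ)) :
    (∃ ℓ₀ > (0:ℝ), ∃ M : ℝ, ∀ x, W ℓ₀ x ≤ M) ↔
      ∀ f : EuclideanSpace ℝ (Fin d) → ℂ, MemLp f (ENNReal.ofReal p) volume →
        ∃ ℓ > (0:ℝ), wintP p (W ℓ) f < ∞ := by
  refine ⟨fun ⟨ℓ₀, hℓ₀, M, hM⟩ f hf => ⟨ℓ₀, hℓ₀, wintP_lt_top_of_le hp hf hM⟩, fun hR => ?_⟩
  by_contra! hunb
  have hpos : ∀ k : ℕ, (0:ℝ) < 1 / (k + 1) := fun k => Nat.one_div_pos_of_nat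
  obtain ⟨f, hf, hftop⟩ := exists_memLp_forall_wintP_eq_top hp (ω := fun k => W (1 / (k + 1)))
    (fun k => hWlsc _ (hpos k)) (fun m k hmk => hWmono _ _ (hpos k) (Nat.one_div_le_one_div hmk))
    (fun k => hunb _ (hpos k))
  obtain ⟨ℓ, hℓ, hfin⟩ := hR f hf
  obtain ⟨n, hn⟩ := exists_nat_one_div_lt hℓ
  have hle := wintP_mono (p := p) (hWmono _ _ (hpos n) hn.le) f
  rw [hftop n, top_le_iff] at hle
  exact hfin.ne hle

theorem forall_bounded_weight_iff_memLp_subset_beurling (hp : 0 < p)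
    (W : ℝ → EuclideanSpace ℝ (Fin d) → ℝ) (hWlsc : ∀ ℓ > (0:ℝ), LowerSemicontinuous (W ℓ)) :
    (∀ ℓ > (0:ℝ), ∃ M : ℝ, ∀ x, W ℓ x ≤ M) ↔
      ∀ f : EuclideanSpace ℝ (Fin d) → ℂ, MemLp f (ENNReal.ofReal p) volume →
        ∀ ℓ > (0:ℝ), wintP p (W ℓ) f < ∞ := by
  refine ⟨fun hB f hf ℓ hℓ => ?_, fun hR ℓ hℓ => ?_⟩
  · obtain ⟨M, hM⟩ := hB ℓ hℓ
    exact wintP_lt_top_of_le hp hf hM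
  · by_contra! hunb
    obtain ⟨f, hf, hftop⟩ := exists_memLp_forall_wintP_eq_top hp (ω := fun _ => W ℓ)
      (fun _ => hWlsc ℓ hℓ) antitone_const (fun _ => hunb)
    exact (hR f hf ℓ hℓ).ne (hftop 0)

end Weighted

theorem stmt_5_general (d : ℕ) (p : ℝ) (hp : 1 ≤ p)
    (W : ℝ → EuclideanSpace ℝ (Fin d) → ℝ)
    (hWmono : ∀ ℓ₁ ℓ₂ : ℝ, 0 < ℓ₁ → ℓ₁ ≤ ℓ₂ → ∀ x, W ℓ₁ x ≤ W ℓ₂ x)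
    (hWcont : ∀ ℓ > (0:ℝ), Continuous (W ℓ)) :
    ((∃ ℓ₀ > (0:ℝ), ∃ M : ℝ, ∀ x, W ℓ₀ x ≤ M) ↔
      (∀ f : EuclideanSpace ℝ (Fin d) → ℂ, MemLp f (ENNReal.ofReal p) volume →
        ∃ ℓ > (0:ℝ), wintP p (W ℓ) f < ⊤)) ∧
    ((∀ ℓ > (0:ℝ), ∃ M : ℝ, ∀ x, W ℓ x ≤ M) ↔
      (∀ f : EuclideanSpace ℝ (Fin d) → ℂ, MemLp f (ENNReal.ofReal p) volume →
        ∀ ℓ > (0:ℝ), wintP p (W ℓ) f < ⊤)) := by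
  have hp0 : 0 < p := one_pos.trans_le hp
  have hWlsc : ∀ ℓ > (0:ℝ), LowerSemicontinuous (W ℓ) :=
    fun ℓ hℓ => (hWcont ℓ hℓ).lowerSemicontinuous
  exact ⟨exists_bounded_weight_iff_memLp_subset_roumieu hp0 W hWmono hWlsc,
    forall_bounded_weight_iff_memLp_subset_beurling hp0 W hWlsc⟩

/-- for a continuous weight function matrix `W` on `ℝ^d` and
`1 ≤ p < ∞`: (a) some `ω^{ℓ₀}` is bounded iff `L^p ⊆ L^p_{{W}}`;
(b) every `ω^ℓ` is bounded iff `L^p ⊆ L^p_{(W)}`. -/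
theorem stmt_5 (d : ℕ) (hd : 0 < d) (p : ℝ) (hp : 1 ≤ p)
    (W : ℝ → EuclideanSpace ℝ (Fin d) → ℝ)
    (hW0 : ∀ ℓ > (0:ℝ), ∀ x, 0 ≤ W ℓ x)
    (hWmono : ∀ ℓ₁ ℓ₂ : ℝ, 0 < ℓ₁ → ℓ₁ ≤ ℓ₂ → ∀ x, W ℓ₁ x ≤ W ℓ₂ x)
    (hWcont : ∀ ℓ > (0:ℝ), Continuous (W ℓ)) :
    ((∃ ℓ₀ > (0:ℝ), ∃ M : ℝ, ∀ x, W ℓ₀ x ≤ M) ↔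
      (∀ f : EuclideanSpace ℝ (Fin d) → ℂ, MemLp f (ENNReal.ofReal p) volume →
        ∃ ℓ > (0:ℝ), wintP p (W ℓ) f < ⊤)) ∧
    ((∀ ℓ > (0:ℝ), ∃ M : ℝ, ∀ x, W ℓ x ≤ M) ↔
      (∀ f : EuclideanSpace ℝ (Fin d) → ℂ, MemLp f (ENNReal.ofReal p) volume →
        ∀ ℓ > (0:ℝ), wintP p (W ℓ) f < ⊤)) :=
  stmt_5_general d p hp W hWmono hWcont
end

section
/- Let S = (σ^ℓ)_{ℓ>0} and T = (τ^ℓ)_{ℓ>0} be continuous, non-decreasing (hence radial) weight function matrices on ℝ^d. Assume S satisfies the logarithmic growth-difference condition, and assume that S or T satisfies the step condition. Let 1 ≤ p < ∞. If L^p_{{S}} ⊆ L^p_{{T}} as sets, then S{⪯}T. -/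
/-!
If `S{⪯}T` fails at some `n`, there are points `x k` tending to infinity with
`τ^{1/(k+1)}(x k) ≥ σ^n(x k) + 2k`. The step condition (for `S` or for `T`) spreads this
inequality over a unit-width spherical shell next to `|x k|`, at the cost of a constant and of a
change of index. A function that is constant on each of these disjoint shells, normalised so
that its `σ`-weighted `p`-th power has mass `e^{-k}` on the `k`-th shell, then lies in
`L^p_{{S}}`, while its `τ^ℓ`-weighted mass on the `k`-th shell is at least `e^{k - C}` for all
large `k`; so it is not in `L^p_{{T}}`.
-/

open MeasureTheory

/-- Membership in the Roumieu space `L^p_{{W}}`. -/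
def MemPR {d : ℕ} (p : ℝ) (W : ℝ → EuclideanSpace ℝ (Fin d) → ℝ)
    (f : EuclideanSpace ℝ (Fin d) → ℂ) : Prop :=
  MemLp f (ENNReal.ofReal p) volume ∧ ∃ ℓ > (0:ℝ), wintP p (W ℓ) f < ⊤

/-- The logarithmic growth-difference condition for a matrix `W`. -/
def LogDiff {d : ℕ} (W : ℝ → EuclideanSpace ℝ (Fin d) → ℝ) : Prop :=
  ∃ a > (1:ℝ), ∀ ℓ > (0:ℝ), ∃ ℓ' > (0:ℝ), ∃ b : ℝ,
    ∀ x, a * Real.log (1 + ‖x‖) + b ≤ W ℓ x - W ℓ' x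

/-- The step condition `ω^{ℓ₁}(n+1) ≤ ω^ℓ(n) + C` (on radial values). -/
def StepCond {d : ℕ} (W : ℝ → EuclideanSpace ℝ (Fin d) → ℝ) : Prop :=
  ∀ ℓ > (0:ℝ), ∃ ℓ₁ > (0:ℝ), ∃ C ≥ (1:ℝ), ∀ n : ℕ,
    ∀ x y : EuclideanSpace ℝ (Fin d), ‖x‖ = (n:ℝ) → ‖y‖ = (n:ℝ) + 1 →
      W ℓ₁ y ≤ W ℓ x + C

open Filter Topology Set Function
open scoped ENNReal

section WeightedBlocks

variable {α : Type*} {E : ℕ → Set α} {c : ℕ → ℝ}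

noncomputable def blockFun (E : ℕ → Set α) (c : ℕ → ℝ) (y : α) : ℂ :=
  ∑' k, (E k).indicator (fun _ => (c k : ℂ)) y

theorem norm_blockFun_of_mem (hE : Pairwise (Disjoint on E)) {k : ℕ} (hc : 0 ≤ c k) {y : α}
    (hy : y ∈ E k) : ‖blockFun E c y‖ = c k := by
  rw [blockFun, tsum_eq_single k fun j hj => indicator_of_notMem (disjoint_right.1 (hE hj) hy) _,
    indicator_of_mem hy, Complex.norm_real, Real.norm_of_nonneg hc]

theorem blockFun_of_forall_notMem {y : α} (hy : ∀ k, y ∉ E k) : blockFun E c y = 0 := by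
  simp [blockFun, indicator_of_notMem (hy _)]

variable [MeasurableSpace α] {μ : Measure α}

theorem memLp_of_lintegral_mul_exp_lt_top {F : Type*} [NormedAddCommGroup F] {f : α → F}
    (hf : AEStronglyMeasurable f μ) {p : ℝ} (hp : 0 < p) {ω : α → ℝ} (hω : ∀ y, 0 ≤ ω y)
    (h : ∫⁻ y, ENNReal.ofReal (‖f y‖ ^ p * Real.exp (ω y)) ∂μ < ∞) :
    MemLp f (ENNReal.ofReal p) μ := by
  refine ⟨hf, (eLpNorm_lt_top_iff_lintegral_rpow_enorm_lt_top (by simpa using hp)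
    ENNReal.ofReal_ne_top).2 (lt_of_le_of_lt (lintegral_mono fun y => ?_) h)⟩
  rw [ENNReal.toReal_ofReal hp.le, ← ofReal_norm,
    ENNReal.ofReal_rpow_of_nonneg (norm_nonneg _) hp.le]
  exact ENNReal.ofReal_le_ofReal
    (le_mul_of_one_le_right (by positivity) (Real.one_le_exp (hω y)))

theorem measurable_blockFun (hE : ∀ k, MeasurableSet (E k)) : Measurable (blockFun E c) :=
  Measurable.tsum fun k => measurable_const.indicator (hE k)

theorem lintegral_blockFun_le (hEm : ∀ k, MeasurableSet (E k)) (hEd : Pairwise (Disjoint on E))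
    (hc : ∀ k, 0 ≤ c k) {p : ℝ} (hp : 0 < p) {ω : α → ℝ} {B : ℕ → ℝ}
    (hωB : ∀ k, ∀ y ∈ E k, ω y ≤ B k) :
    ∫⁻ y, ENNReal.ofReal (‖blockFun E c y‖ ^ p * Real.exp (ω y)) ∂μ ≤
      ∑' k, ENNReal.ofReal (c k ^ p * Real.exp (B k)) * μ (E k) := by
  calc _ ≤ ∫⁻ y, ∑' k, (E k).indicator
          (fun _ => ENNReal.ofReal (c k ^ p * Real.exp (B k))) y ∂μ := by
        refine lintegral_mono fun y => ?_
        by_cases hy : ∃ k, y ∈ E k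
        · obtain ⟨k, hk⟩ := hy
          refine le_trans ?_ (ENNReal.le_tsum k)
          rw [indicator_of_mem hk, norm_blockFun_of_mem hEd (hc k) hk]
          exact ENNReal.ofReal_le_ofReal (mul_le_mul_of_nonneg_left
            (Real.exp_le_exp.2 (hωB k y hk)) (Real.rpow_nonneg (hc k) p))
        · push Not at hy
          simp [blockFun_of_forall_notMem hy, Real.zero_rpow hp.ne']
    _ = _ := by
        rw [lintegral_tsum fun k => (measurable_const.indicator (hEm k)).aemeasurable]
        simp_rw [lintegral_indicator_const (hEm _)]

theorem le_lintegral_blockFun {k : ℕ} (hEm : MeasurableSet (E k)) (hEd : Pairwise (Disjoint on E))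
    (hc : 0 ≤ c k) {p A : ℝ} {ν : α → ℝ} (hν : ∀ y ∈ E k, A ≤ ν y) :
    ENNReal.ofReal (c k ^ p * Real.exp A) * μ (E k) ≤
      ∫⁻ y, ENNReal.ofReal (‖blockFun E c y‖ ^ p * Real.exp (ν y)) ∂μ := by
  rw [← lintegral_indicator_const hEm]
  refine lintegral_mono fun y => ?_
  by_cases hy : y ∈ E k
  · rw [indicator_of_mem hy, norm_blockFun_of_mem hEd hc hy]
    exact ENNReal.ofReal_le_ofReal (mul_le_mul_of_nonneg_left
      (Real.exp_le_exp.2 (hν y hy)) (Real.rpow_nonneg hc p))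
  · rw [indicator_of_notMem hy]
    exact zero_le

theorem exists_memLp_lintegral_mul_exp_lt_top_eq_top {p : ℝ} (hp : 0 < p)
    (hEm : ∀ k, MeasurableSet (E k)) (hEd : Pairwise (Disjoint on E))
    (hE0 : ∀ k, μ (E k) ≠ 0) (hEtop : ∀ k, μ (E k) ≠ ∞) {ω : α → ℝ} (hω : ∀ y, 0 ≤ ω y)
    {B : ℕ → ℝ} (hωB : ∀ k, ∀ y ∈ E k, ω y ≤ B k) :
    ∃ f : α → ℂ, MemLp f (ENNReal.ofReal p) μ ∧
      ∫⁻ y, ENNReal.ofReal (‖f y‖ ^ p * Real.exp (ω y)) ∂μ < ∞ ∧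
      ∀ (ν : α → ℝ) (C : ℝ), (∀ᶠ k in atTop, ∀ y ∈ E k, B k + 2 * k ≤ ν y + C) →
        ∫⁻ y, ENNReal.ofReal (‖f y‖ ^ p * Real.exp (ν y)) ∂μ = ∞ := by
  set c : ℕ → ℝ := fun k => (Real.exp (-B k - k) / μ.real (E k)) ^ p⁻¹
  have hc : ∀ k, 0 ≤ c k := fun k => by positivity
  have hmass : ∀ k t, ENNReal.ofReal (c k ^ p * Real.exp (B k + t)) * μ (E k) =
      ENNReal.ofReal (Real.exp (t - k)) := by
    intro k t
    have hm : 0 < μ.real (E k) := ENNReal.toReal_pos (hE0 k) (hEtop k)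
    rw [← ofReal_measureReal (hEtop k), ← ENNReal.ofReal_mul (by positivity),
      Real.rpow_inv_rpow (by positivity) hp.ne', div_mul_eq_mul_div, div_mul_cancel₀ _ hm.ne',
      ← Real.exp_add]
    ring_nf
  have hfω : ∫⁻ y, ENNReal.ofReal (‖blockFun E c y‖ ^ p * Real.exp (ω y)) ∂μ < ∞ := by
    have hmass0 : ∀ k, ENNReal.ofReal (c k ^ p * Real.exp (B k)) * μ (E k) =
        ENNReal.ofReal (Real.exp (-k)) := fun k => by simpa using hmass k 0
    refine (lintegral_blockFun_le hEm hEd hc hp hωB).trans_lt ?_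
    simp_rw [hmass0, ← ENNReal.ofReal_tsum_of_nonneg
      (fun k => (Real.exp_pos _).le) Real.summable_exp_neg_nat]
    exact ENNReal.ofReal_lt_top
  refine ⟨blockFun E c, memLp_of_lintegral_mul_exp_lt_top
    (measurable_blockFun hEm).aestronglyMeasurable hp hω hfω, hfω, fun ν C hν => ?_⟩
  have hlim : Tendsto (fun k : ℕ => ENNReal.ofReal (Real.exp (2 * k - C - k))) atTop (𝓝 ∞) :=
    ENNReal.tendsto_ofReal_atTop.comp <| Real.tendsto_exp_atTop.comp <|
      (tendsto_atTop_add_const_right _ (-C) tendsto_natCast_atTop_atTop).congr fun k => by ring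
  refine top_le_iff.1 (le_of_tendsto hlim (hν.mono fun k hk => ?_))
  rw [← hmass]
  exact le_lintegral_blockFun (hEm k) hEd (hc k) fun y hy => by linarith [hk y hy]

end WeightedBlocks

section Shells

variable {X : Type*} [NormedAddCommGroup X]

def unitShell (a : ℝ) : Set X := (‖·‖) ⁻¹' Icc a (a + 1)

theorem pairwise_disjoint_unitShell {a : ℕ → ℝ} (ha : ∀ k, a k + 1 < a (k + 1)) :
    Pairwise (Disjoint on fun k => (unitShell (a k) : Set X)) := by
  have hmono : Monotone a := (strictMono_nat_of_lt_succ fun k => by linarith [ha k]).monotone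
  refine (pairwise_disjoint_on _).2 fun k j hkj => disjoint_left.2 fun y hyk hyj => ?_
  linarith [hyk.2, hyj.1, ha k, hmono (Nat.succ_le_of_lt hkj)]

variable [MeasurableSpace X] (μ : Measure X)

theorem measurableSet_unitShell [OpensMeasurableSpace X] {a : ℝ} :
    MeasurableSet (unitShell a : Set X) :=
  measurable_norm measurableSet_Icc

theorem measure_unitShell_ne_zero [NormedSpace ℝ X] [Nontrivial X] [μ.IsOpenPosMeasure] {a : ℝ}
    (ha : 0 ≤ a) : μ (unitShell a) ≠ 0 := by
  obtain ⟨x, hx⟩ := exists_norm_eq X (by linarith : 0 ≤ a + 1 / 2)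
  have hopen : IsOpen ((‖·‖) ⁻¹' Ioo a (a + 1) : Set X) := isOpen_Ioo.preimage continuous_norm
  have hx : x ∈ (‖·‖) ⁻¹' Ioo a (a + 1) := by
    simp only [mem_preimage, hx, mem_Ioo]
    constructor <;> linarith
  exact fun h => (hopen.measure_pos μ ⟨x, hx⟩).ne'
    (measure_mono_null (preimage_mono Ioo_subset_Icc_self) h)

theorem measure_unitShell_ne_top [ProperSpace X] [IsFiniteMeasureOnCompacts μ] {a : ℝ} :
    μ (unitShell a) ≠ ∞ :=
  ((measure_mono fun _ hy => mem_closedBall_zero_iff.2 hy.2).trans_lt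
    measure_closedBall_lt_top).ne

theorem exists_memLp_unitShell [OpensMeasurableSpace X] [NormedSpace ℝ X] [Nontrivial X]
    [ProperSpace X] [μ.IsOpenPosMeasure] [IsFiniteMeasureOnCompacts μ] {p : ℝ} (hp : 0 < p)
    {a : ℕ → ℝ} (ha0 : ∀ k, 0 ≤ a k) (ha : ∀ k, a k + 1 < a (k + 1)) {ω : X → ℝ}
    (hω : ∀ y, 0 ≤ ω y) {B : ℕ → ℝ} (hωB : ∀ k, ∀ y ∈ unitShell (a k), ω y ≤ B k) :
    ∃ f : X → ℂ, MemLp f (ENNReal.ofReal p) μ ∧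
      ∫⁻ y, ENNReal.ofReal (‖f y‖ ^ p * Real.exp (ω y)) ∂μ < ∞ ∧
      ∀ (ν : X → ℝ) (C : ℝ), (∀ᶠ k in atTop, ∀ y ∈ unitShell (a k), B k + 2 * k ≤ ν y + C) →
        ∫⁻ y, ENNReal.ofReal (‖f y‖ ^ p * Real.exp (ν y)) ∂μ = ∞ :=
  exists_memLp_lintegral_mul_exp_lt_top_eq_top hp (fun _ => measurableSet_unitShell)
    (pairwise_disjoint_unitShell ha) (fun k => measure_unitShell_ne_zero μ (ha0 k))
    (fun _ => measure_unitShell_ne_top μ) hω hωB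

end Shells

theorem exists_seq_of_forall_exists_lt {β : Type*} (g : β → ℝ) {P : ℕ → β → Prop}
    (h : ∀ k (R : ℝ), ∃ x, R < g x ∧ P k x) :
    ∃ x : ℕ → β, (∀ k, P k (x k)) ∧ (∀ k, 1 ≤ g (x k)) ∧ ∀ k, g (x k) + 2 < g (x (k + 1)) := by
  choose F hF using h
  let x : ℕ → β := fun k => Nat.rec (F 0 1) (fun k xk => F (k + 1) (g xk + 2)) k
  refine ⟨x, fun k => ?_, fun k => ?_, fun k => (hF _ _).1⟩
  · cases k with
    | zero => exact (hF 0 1).2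
    | succ k => exact (hF _ _).2
  · induction k with
    | zero => exact (hF 0 1).1.le
    | succ k ih => linarith [(hF (k + 1) (g (x k) + 2)).1]

theorem exists_lt_norm_add_le_of_forall_exists_add_lt {X : Type*} [NormedAddCommGroup X]
    [NormedSpace ℝ X] [Nontrivial X] {f g : X → ℝ} (hf : ∀ x, 0 ≤ f x)
    (hg : ∀ x y, ‖x‖ ≤ ‖y‖ → g x ≤ g y) (h : ∀ C ≥ (1 : ℝ), ∃ x, f x + C < g x) (R M : ℝ) :
    ∃ x, R < ‖x‖ ∧ f x + M ≤ g x := by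
  obtain ⟨z, hz⟩ := exists_norm_eq X (le_max_right R 0)
  obtain ⟨x, hx⟩ := h (max 1 (max M (g z))) (le_max_left _ _)
  have hM : M ≤ max 1 (max M (g z)) := le_max_of_le_right (le_max_left _ _)
  refine ⟨x, lt_of_not_ge fun hxR => ?_, by linarith [hf x]⟩
  have hgz : g z ≤ max 1 (max M (g z)) := le_max_of_le_right (le_max_right _ _)
  linarith [hf x, hg x z (hz ▸ hxR.trans (le_max_left R 0))]

theorem StepCond.exists_le_of_norm_le_add_one {d : ℕ} [NeZero d]
    {W : ℝ → EuclideanSpace ℝ (Fin d) → ℝ} (hW : StepCond W)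
    (hrad : ∀ ℓ > (0 : ℝ), ∀ x y : EuclideanSpace ℝ (Fin d), ‖x‖ ≤ ‖y‖ → W ℓ x ≤ W ℓ y)
    {ℓ : ℝ} (hℓ : 0 < ℓ) :
    ∃ ℓ' > (0 : ℝ), ∃ C : ℝ, ∀ y z : EuclideanSpace ℝ (Fin d), ‖z‖ ≤ ‖y‖ + 1 →
      W ℓ' z ≤ W ℓ y + C := by
  obtain ⟨ℓ₁, hℓ₁, C₁, -, h₁⟩ := hW ℓ hℓ
  obtain ⟨ℓ₂, hℓ₂, C₂, -, h₂⟩ := hW ℓ₁ hℓ₁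
  refine ⟨ℓ₂, hℓ₂, C₁ + C₂, fun y z hyz => ?_⟩
  set m := ⌊‖y‖⌋₊
  obtain ⟨u, hu⟩ := exists_norm_eq (EuclideanSpace ℝ (Fin d)) (Nat.cast_nonneg (α := ℝ) m)
  obtain ⟨v, hv⟩ := exists_norm_eq (EuclideanSpace ℝ (Fin d)) (by positivity : (0 : ℝ) ≤ m + 1)
  obtain ⟨w, hw⟩ := exists_norm_eq (EuclideanSpace ℝ (Fin d)) (by positivity : (0 : ℝ) ≤ m + 2)
  have hzw : W ℓ₂ z ≤ W ℓ₂ w :=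
    hrad ℓ₂ hℓ₂ z w (by rw [hw]; linarith [Nat.lt_floor_add_one ‖y‖])
  have hwv : W ℓ₂ w ≤ W ℓ₁ v + C₂ :=
    h₂ (m + 1) v w (by push_cast; exact hv) (by push_cast; rw [hw]; ring)
  have hvu : W ℓ₁ v ≤ W ℓ u + C₁ := h₁ m u v hu hv
  have huy : W ℓ u ≤ W ℓ y := hrad ℓ hℓ u y (by rw [hu]; exact Nat.floor_le (norm_nonneg y))
  linarith

theorem stmt_15_general (d : ℕ) (hd : 0 < d)
    (σ τ : ℝ → EuclideanSpace ℝ (Fin d) → ℝ)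
    (hσ0 : ∀ ℓ > (0:ℝ), ∀ x, 0 ≤ σ ℓ x)
    (hτm : ∀ ℓ₁ ℓ₂ : ℝ, 0 < ℓ₁ → ℓ₁ ≤ ℓ₂ → ∀ x, τ ℓ₁ x ≤ τ ℓ₂ x)
    (hσrad : ∀ ℓ > (0:ℝ), ∀ x y : EuclideanSpace ℝ (Fin d),
      ‖x‖ ≤ ‖y‖ → σ ℓ x ≤ σ ℓ y)
    (hτrad : ∀ ℓ > (0:ℝ), ∀ x y : EuclideanSpace ℝ (Fin d),
      ‖x‖ ≤ ‖y‖ → τ ℓ x ≤ τ ℓ y)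
    (hstep : StepCond σ ∨ StepCond τ)
    (p : ℝ) (hp : 1 ≤ p)
    (hincl : ∀ f, MemPR p σ f → MemPR p τ f) :
    ∀ n > (0:ℝ), ∃ ℓ > (0:ℝ), ∃ C ≥ (1:ℝ), ∀ x, τ ℓ x ≤ σ n x + C := by
  have : NeZero d := ⟨hd.ne'⟩
  have hp0 : 0 < p := by linarith
  intro n hn
  by_contra! hcon
  obtain ⟨x, hxτ, hx1, hxgap⟩ := exists_seq_of_forall_exists_lt (‖·‖) fun k R =>
    exists_lt_norm_add_le_of_forall_exists_add_lt (hσ0 n hn) (hτrad _ (by positivity))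
      (hcon (1 / (k + 1)) (by positivity)) R (2 * k)
  have hτx : ∀ ℓ > (0:ℝ), ∀ᶠ k : ℕ in atTop, τ (1 / (k + 1)) (x k) ≤ τ ℓ (x k) := fun ℓ hℓ =>
    (tendsto_one_div_add_atTop_nhds_zero_nat.eventually_le_const hℓ).mono fun k hk =>
      hτm _ _ (by positivity) hk _
  rcases hstep with hσstep | hτstep
  -- shells outside `‖x k‖`: `τ^ℓ` only grows there, and the step condition of `S` bounds `σ`
  · obtain ⟨n', hn', C, hC⟩ := hσstep.exists_le_of_norm_le_add_one hσrad hn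
    obtain ⟨f, hfLp, hfσ, hfτ⟩ := exists_memLp_unitShell volume hp0 (fun k => norm_nonneg (x k))
      (fun k => by linarith [hxgap k]) (hσ0 n' hn') (B := fun k => σ n (x k) + C)
      fun k y hy => hC (x k) y hy.2
    obtain ⟨-, ℓ, hℓ, hfτℓ⟩ := hincl f ⟨hfLp, n', hn', hfσ⟩
    refine hfτℓ.ne (hfτ (τ ℓ) C ((hτx ℓ hℓ).mono fun k hk y hy => ?_))
    linarith [hxτ k, hτrad ℓ hℓ _ _ hy.1]
  -- shells inside `‖x k‖`: `σ^n` only decreases there, and the step condition of `T` bounds `τ`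
  · obtain ⟨f, hfLp, hfσ, hfτ⟩ := exists_memLp_unitShell volume hp0 (a := fun k => ‖x k‖ - 1)
      (fun k => by linarith [hx1 k]) (fun k => by linarith [hxgap k]) (hσ0 n hn)
      (B := fun k => σ n (x k)) fun k y hy => hσrad n hn y (x k) (by linarith [hy.2])
    obtain ⟨-, ℓ, hℓ, hfτℓ⟩ := hincl f ⟨hfLp, n, hn, hfσ⟩
    obtain ⟨ℓ', hℓ', C, hC⟩ := hτstep.exists_le_of_norm_le_add_one hτrad hℓ
    refine hfτℓ.ne (hfτ (τ ℓ) C ((hτx ℓ' hℓ').mono fun k hk y hy => ?_))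
    linarith [hxτ k, hC y (x k) (by linarith [hy.1])]

/-- for continuous, non-decreasing (hence radial) weight
function matrices `S`, `T` on `ℝ^d`, with `S` satisfying the logarithmic
growth-difference condition and `S` or `T` satisfying the step condition:
the inclusion `L^p_{{S}} ⊆ L^p_{{T}}` (as sets) implies `S{⪯}T`. -/
theorem stmt_15 (d : ℕ) (hd : 0 < d)
    (σ τ : ℝ → EuclideanSpace ℝ (Fin d) → ℝ)
    (hσ0 : ∀ ℓ > (0:ℝ), ∀ x, 0 ≤ σ ℓ x) (hτ0 : ∀ ℓ > (0:ℝ), ∀ x, 0 ≤ τ ℓ x)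
    (hσm : ∀ ℓ₁ ℓ₂ : ℝ, 0 < ℓ₁ → ℓ₁ ≤ ℓ₂ → ∀ x, σ ℓ₁ x ≤ σ ℓ₂ x)
    (hτm : ∀ ℓ₁ ℓ₂ : ℝ, 0 < ℓ₁ → ℓ₁ ≤ ℓ₂ → ∀ x, τ ℓ₁ x ≤ τ ℓ₂ x)
    (hσcont : ∀ ℓ > (0:ℝ), Continuous (σ ℓ))
    (hτcont : ∀ ℓ > (0:ℝ), Continuous (τ ℓ))
    (hσrad : ∀ ℓ > (0:ℝ), ∀ x y : EuclideanSpace ℝ (Fin d),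
      ‖x‖ ≤ ‖y‖ → σ ℓ x ≤ σ ℓ y)
    (hτrad : ∀ ℓ > (0:ℝ), ∀ x y : EuclideanSpace ℝ (Fin d),
      ‖x‖ ≤ ‖y‖ → τ ℓ x ≤ τ ℓ y)
    (hσlog : LogDiff σ)
    (hstep : StepCond σ ∨ StepCond τ)
    (p : ℝ) (hp : 1 ≤ p)
    (hincl : ∀ f, MemPR p σ f → MemPR p τ f) :
    ∀ n > (0:ℝ), ∃ ℓ > (0:ℝ), ∃ C ≥ (1:ℝ), ∀ x, τ ℓ x ≤ σ n x + C :=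
  stmt_15_general d hd σ τ hσ0 hτm hσrad hτrad hstep p hp hincl
end

section
/- Let S = (σ^ℓ)_{ℓ>0} and T = (τ^ℓ)_{ℓ>0} be continuous, non-decreasing (hence radial) weight function matrices on ℝ^d, and assume S satisfies both the logarithmic growth-difference condition and the step condition. Then for any 1 ≤ p < ∞ the following are equivalent: (i) L^p_{{S}} ⊆ L^p_{(T)} as sets; (ii) S ◁ T, i.e. for every ℓ > 0 and every n > 0 there exists D ≥ 1 with τ^ℓ(x) ≤ σ^n(x) + D for all x ∈ ℝ^d. The same equivalence holds if, instead of S satisfying the step condition, T satisfies the reverse step condition: for every ℓ₁ > 0 there exist ℓ > 0 and C ≥ 1 with τ^{ℓ₁}(n+1) ≤ τ^ℓ(n) + C for all n ∈ ℕ. -/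
open MeasureTheory

/-- Membership in the Beurling space `L^p_{(W)}`. -/
def MemPB {d : ℕ} (p : ℝ) (W : ℝ → EuclideanSpace ℝ (Fin d) → ℝ)
    (f : EuclideanSpace ℝ (Fin d) → ℂ) : Prop :=
  MemLp f (ENNReal.ofReal p) volume ∧ ∀ ℓ > (0:ℝ), wintP p (W ℓ) f < ⊤

/-- The reverse step condition: for every `ℓ₁` there is `ℓ` with
`ω^{ℓ₁}(n+1) ≤ ω^ℓ(n) + C` (on radial values). -/
def RevStepCond {d : ℕ} (W : ℝ → EuclideanSpace ℝ (Fin d) → ℝ) : Prop :=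
  ∀ ℓ₁ > (0:ℝ), ∃ ℓ > (0:ℝ), ∃ C ≥ (1:ℝ), ∀ n : ℕ,
    ∀ x y : EuclideanSpace ℝ (Fin d), ‖x‖ = (n:ℝ) → ‖y‖ = (n:ℝ) + 1 →
      W ℓ₁ y ≤ W ℓ x + C

/-! If `τ^ℓ - σ^n` is unbounded above, choose for every `k` a bounded open set `U_k` on which
`τ^ℓ ≥ σ^n + k log 2` and let `|f|^p = ∑_k 2^{-k} 1_{U_k} / ∫_{U_k} e^{σ^n}`. Then
`∫ |f|^p e^{σ^n} = 2`, whereas each summand contributes at least `1` to `∫ |f|^p e^{τ^ℓ}`.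
The `U_k` need not be disjoint, since the series only has to be finite almost everywhere.
Conversely, `τ^ℓ ≤ σ^n + D` gives `∫ |f|^p e^{τ^ℓ} ≤ e^D ∫ |f|^p e^{σ^n}`. -/

open scoped ENNReal

theorem exists_setLIntegral_exp_pos_lt_top_of_lt_add {X : Type*} [MetricSpace X] [ProperSpace X]
    [MeasurableSpace X] [BorelSpace X] (μ : Measure X) [μ.IsOpenPosMeasure]
    [IsFiniteMeasureOnCompacts μ] {σ τ : X → ℝ} (hσ : Continuous σ)
    (hτ : Continuous τ) {c : ℝ} {x₀ : X} (hx₀ : σ x₀ + c < τ x₀) :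
    ∃ U : Set X, MeasurableSet U ∧ (∀ x ∈ U, σ x + c ≤ τ x) ∧
      0 < ∫⁻ x in U, ENNReal.ofReal (Real.exp (σ x)) ∂μ ∧
      ∫⁻ x in U, ENNReal.ofReal (Real.exp (σ x)) ∂μ < ∞ := by
  set U := {x | σ x + c < τ x} ∩ Metric.ball x₀ 1
  have hUo : IsOpen U := (isOpen_lt (by fun_prop) hτ).inter Metric.isOpen_ball
  have hexp : Measurable fun x => ENNReal.ofReal (Real.exp (σ x)) := by fun_prop
  refine ⟨U, hUo.measurableSet, fun x hx => hx.1.le, ?_, ?_⟩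
  · rw [setLIntegral_pos_iff hexp]
    refine (hUo.measure_pos μ ⟨x₀, hx₀, Metric.mem_ball_self one_pos⟩).trans_le
      (measure_mono fun x hx => ⟨?_, hx⟩)
    simp [Real.exp_pos]
  · calc ∫⁻ x in U, ENNReal.ofReal (Real.exp (σ x)) ∂μ
        ≤ ∫⁻ x in Metric.closedBall x₀ 1, ENNReal.ofReal (Real.exp (σ x)) ∂μ :=
          lintegral_mono_set (Set.inter_subset_right.trans Metric.ball_subset_closedBall)
      _ < ∞ := setLIntegral_lt_top_of_isCompact (isCompact_closedBall x₀ 1).measure_lt_top.ne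
          (isCompact_closedBall x₀ 1) (f := fun x => (Real.exp (σ x)).toNNReal) (by fun_prop)

theorem ofReal_exp_mul_setLIntegral_exp_le {X : Type*} [MeasurableSpace X] (μ : Measure X)
    {U : Set X} {ω₁ ω₂ : X → ℝ} (h₂ : Measurable ω₂) {c : ℝ} (h : ∀ x ∈ U, ω₁ x + c ≤ ω₂ x) :
    ENNReal.ofReal (Real.exp c) * ∫⁻ x in U, ENNReal.ofReal (Real.exp (ω₁ x)) ∂μ ≤
      ∫⁻ x in U, ENNReal.ofReal (Real.exp (ω₂ x)) ∂μ := by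
  rw [← lintegral_const_mul' _ _ ENNReal.ofReal_ne_top]
  refine setLIntegral_mono (by fun_prop) fun x hx => ?_
  rw [← ENNReal.ofReal_mul (Real.exp_nonneg _), ← Real.exp_add]
  gcongr
  linarith [h x hx]

theorem lintegral_tsum_indicator_mul {X : Type*} [MeasurableSpace X] (μ : Measure X)
    {U : ℕ → Set X} (hU : ∀ k, MeasurableSet (U k)) (q : ℕ → ℝ≥0∞) {w : X → ℝ≥0∞}
    (hw : Measurable w) :
    ∫⁻ x, (∑' k, (U k).indicator (fun _ => q k) x) * w x ∂μ =
      ∑' k, q k * ∫⁻ x in U k, w x ∂μ := by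
  simp_rw [← ENNReal.tsum_mul_right, ← Set.indicator_mul_left]
  rw [lintegral_tsum fun k => ((hw.const_mul (q k)).indicator (hU k)).aemeasurable]
  simp_rw [lintegral_indicator (hU _), lintegral_const_mul _ hw]

section WeightedIntegral

variable {d : ℕ} {p : ℝ}

theorem wintP_le_of_le_add {ω₁ ω₂ : EuclideanSpace ℝ (Fin d) → ℝ} {D : ℝ}
    (h : ∀ x, ω₂ x ≤ ω₁ x + D) (f : EuclideanSpace ℝ (Fin d) → ℂ) :
    wintP p ω₂ f ≤ ENNReal.ofReal (Real.exp D) * wintP p ω₁ f := by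
  rw [wintP, wintP, ← lintegral_const_mul' _ _ ENNReal.ofReal_ne_top]
  refine lintegral_mono fun x => ?_
  rw [← ENNReal.ofReal_mul (Real.exp_nonneg _), mul_left_comm, ← Real.exp_add]
  gcongr
  linarith [h x]

theorem memLp_of_wintP_lt_top (hp : 0 < p) {ω : EuclideanSpace ℝ (Fin d) → ℝ}
    (hω : ∀ x, 0 ≤ ω x) {f : EuclideanSpace ℝ (Fin d) → ℂ}
    (hf : AEStronglyMeasurable f volume) (h : wintP p ω f < ∞) :
    MemLp f (ENNReal.ofReal p) volume := by
  refine ⟨hf, (eLpNorm_lt_top_iff_lintegral_rpow_enorm_lt_top (by simpa using hp)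
    ENNReal.ofReal_ne_top).2 (lt_of_le_of_lt (lintegral_mono fun x => ?_) h)⟩
  rw [ENNReal.toReal_ofReal hp.le, ← ofReal_norm, ENNReal.ofReal_rpow_of_nonneg (norm_nonneg _) hp.le]
  exact ENNReal.ofReal_le_ofReal (le_mul_of_one_le_right (by positivity) (Real.one_le_exp (hω x)))

theorem wintP_rpow_inv_eq_lintegral (hp : 0 < p) (ω : EuclideanSpace ℝ (Fin d) → ℝ)
    {F : EuclideanSpace ℝ (Fin d) → ℝ≥0∞} (hF : ∀ᵐ x, F x < ∞) :
    wintP p ω (fun x => (((F x).toReal ^ p⁻¹ : ℝ) : ℂ)) =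
      ∫⁻ x, F x * ENNReal.ofReal (Real.exp (ω x)) := by
  refine lintegral_congr_ae (hF.mono fun x hx => ?_)
  dsimp only
  rw [Complex.norm_real, Real.norm_of_nonneg (by positivity),
    Real.rpow_inv_rpow ENNReal.toReal_nonneg hp.ne', ENNReal.ofReal_mul ENNReal.toReal_nonneg,
    ENNReal.ofReal_toReal hx.ne]

end WeightedIntegral

theorem exists_wintP_lt_top_and_wintP_eq_top {d : ℕ} {p : ℝ} (hp : 0 < p)
    {ω₁ ω₂ : EuclideanSpace ℝ (Fin d) → ℝ} (h₁ : Continuous ω₁) (h₂ : Continuous ω₂)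
    (hgap : ∀ D, ∃ x, ω₁ x + D < ω₂ x) :
    ∃ f : EuclideanSpace ℝ (Fin d) → ℂ, Measurable f ∧ wintP p ω₁ f < ∞ ∧ wintP p ω₂ f = ∞ := by
  choose x hx using hgap
  choose U hUm hUgap hUpos hUfin using fun k : ℕ =>
    exists_setLIntegral_exp_pos_lt_top_of_lt_add volume h₁ h₂ (hx (k * Real.log 2))
  set m := fun k => ∫⁻ y in U k, ENNReal.ofReal (Real.exp (ω₁ y))
  set F := fun x => ∑' k, (U k).indicator (fun _ => 2⁻¹ ^ k / m k) x
  have hF : ∀ ω, Continuous ω → ∫⁻ x, F x * ENNReal.ofReal (Real.exp (ω x)) =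
      ∑' k, 2⁻¹ ^ k / m k * ∫⁻ y in U k, ENNReal.ofReal (Real.exp (ω y)) := fun ω hω =>
    lintegral_tsum_indicator_mul volume hUm _ (by fun_prop)
  have hF₁ : ∫⁻ x, F x * ENNReal.ofReal (Real.exp (ω₁ x)) = 2 := by
    have hm : ∀ k, 2⁻¹ ^ k / m k * m k = 2⁻¹ ^ k := fun k =>
      ENNReal.div_mul_cancel (hUpos k).ne' (hUfin k).ne
    rw [hF ω₁ h₁, tsum_congr hm, ENNReal.tsum_geometric, ENNReal.one_sub_inv_two, inv_inv]
  have hF₂ : ∫⁻ x, F x * ENNReal.ofReal (Real.exp (ω₂ x)) = ∞ := by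
    rw [hF ω₂ h₂, eq_top_iff, ← ENNReal.tsum_const_eq_top_of_ne_zero (α := ℕ) one_ne_zero]
    refine ENNReal.tsum_le_tsum fun k => ?_
    have h2k : (2 : ℝ≥0∞) ^ k = ENNReal.ofReal (Real.exp (k * Real.log 2)) := by
      rw [Real.exp_nat_mul, Real.exp_log two_pos, ENNReal.ofReal_pow zero_le_two, ENNReal.ofReal_ofNat]
    have hU₂ : 2 ^ k * m k ≤ ∫⁻ y in U k, ENNReal.ofReal (Real.exp (ω₂ y)) :=
      h2k ▸ ofReal_exp_mul_setLIntegral_exp_le volume h₂.measurable (hUgap k)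
    calc (1 : ℝ≥0∞) = 2⁻¹ ^ k / m k * (2 ^ k * m k) := by
          rw [mul_comm (2 ^ k), ← mul_assoc, ENNReal.div_mul_cancel (hUpos k).ne' (hUfin k).ne,
            ← mul_pow, ENNReal.inv_mul_cancel two_ne_zero ENNReal.ofNat_ne_top, one_pow]
      _ ≤ _ := by gcongr
  have hFm : Measurable F := Measurable.tsum fun k => measurable_const.indicator (hUm k)
  have hFfin : ∀ᵐ x, F x < ∞ :=
    (ae_lt_top (by fun_prop) (hF₁ ▸ ENNReal.ofNat_ne_top)).mono fun y hy =>
      ENNReal.lt_top_of_mul_ne_top_left hy.ne (by simp [Real.exp_pos])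
  refine ⟨fun y => (((F y).toReal ^ p⁻¹ : ℝ) : ℂ), by fun_prop, ?_, ?_⟩
  · rw [wintP_rpow_inv_eq_lintegral hp _ hFfin, hF₁]
    exact ENNReal.ofNat_lt_top
  · rw [wintP_rpow_inv_eq_lintegral hp _ hFfin, hF₂]

theorem stmt_16_general (d : ℕ)
    (σ τ : ℝ → EuclideanSpace ℝ (Fin d) → ℝ)
    (hσ0 : ∀ ℓ > (0:ℝ), ∀ x, 0 ≤ σ ℓ x)
    (hσcont : ∀ ℓ > (0:ℝ), Continuous (σ ℓ))
    (hτcont : ∀ ℓ > (0:ℝ), Continuous (τ ℓ))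
    (p : ℝ) (hp : 1 ≤ p) :
    (∀ f, MemPR p σ f → MemPB p τ f) ↔
      (∀ ℓ > (0:ℝ), ∀ n > (0:ℝ), ∃ D ≥ (1:ℝ), ∀ x, τ ℓ x ≤ σ n x + D) := by
  have hp₀ : 0 < p := by linarith
  constructor
  · intro hincl ℓ hℓ n hn
    by_contra! hgap
    obtain ⟨f, hfm, hfσ, hfτ⟩ := exists_wintP_lt_top_and_wintP_eq_top hp₀ (hσcont n hn)
      (hτcont ℓ hℓ) fun D => (hgap (max D 1) (le_max_right D 1)).imp fun x hx => by
        linarith [le_max_left D 1]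
    have hfR : MemPR p σ f :=
      ⟨memLp_of_wintP_lt_top hp₀ (hσ0 n hn) hfm.aestronglyMeasurable hfσ, n, hn, hfσ⟩
    exact ((hincl f hfR).2 ℓ hℓ).ne hfτ
  · rintro hdom f ⟨hfLp, ℓ₀, hℓ₀, hfσ⟩
    refine ⟨hfLp, fun ℓ hℓ => ?_⟩
    obtain ⟨D, -, hD⟩ := hdom ℓ hℓ ℓ₀ hℓ₀
    exact (wintP_le_of_le_add hD f).trans_lt (ENNReal.mul_lt_top ENNReal.ofReal_lt_top hfσ)

/-- for continuous, non-decreasing (hence radial) weight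
function matrices `S`, `T` on `ℝ^d`, with `S` satisfying the logarithmic
growth-difference condition and either `S` the step condition or `T` the
reverse step condition, and any `1 ≤ p < ∞`:
`L^p_{{S}} ⊆ L^p_{(T)}` (as sets) iff `S ◁ T`. -/
theorem stmt_16 (d : ℕ) (hd : 0 < d)
    (σ τ : ℝ → EuclideanSpace ℝ (Fin d) → ℝ)
    (hσ0 : ∀ ℓ > (0:ℝ), ∀ x, 0 ≤ σ ℓ x) (hτ0 : ∀ ℓ > (0:ℝ), ∀ x, 0 ≤ τ ℓ x)
    (hσm : ∀ ℓ₁ ℓ₂ : ℝ, 0 < ℓ₁ → ℓ₁ ≤ ℓ₂ → ∀ x, σ ℓ₁ x ≤ σ ℓ₂ x)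
    (hτm : ∀ ℓ₁ ℓ₂ : ℝ, 0 < ℓ₁ → ℓ₁ ≤ ℓ₂ → ∀ x, τ ℓ₁ x ≤ τ ℓ₂ x)
    (hσcont : ∀ ℓ > (0:ℝ), Continuous (σ ℓ))
    (hτcont : ∀ ℓ > (0:ℝ), Continuous (τ ℓ))
    (hσrad : ∀ ℓ > (0:ℝ), ∀ x y : EuclideanSpace ℝ (Fin d),
      ‖x‖ ≤ ‖y‖ → σ ℓ x ≤ σ ℓ y)
    (hτrad : ∀ ℓ > (0:ℝ), ∀ x y : EuclideanSpace ℝ (Fin d),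
      ‖x‖ ≤ ‖y‖ → τ ℓ x ≤ τ ℓ y)
    (hσlog : LogDiff σ)
    (hstep : StepCond σ ∨ RevStepCond τ)
    (p : ℝ) (hp : 1 ≤ p) :
    (∀ f, MemPR p σ f → MemPB p τ f) ↔
      (∀ ℓ > (0:ℝ), ∀ n > (0:ℝ), ∃ D ≥ (1:ℝ), ∀ x, τ ℓ x ≤ σ n x + D) :=
  stmt_16_general d σ τ hσ0 hσcont hτcont p hp
end

section
/- There exists an uncountable set Ω of functions ω : [0,∞) → [0,∞) with the following properties. Every ω ∈ Ω satisfies: (I) ω(t) = 0 for all t ∈ [0,1], ω is continuous and non-decreasing, and lim_{t→∞} ω(t) = +∞; (II) log(t) = o(ω(t)) as t → ∞, i.e. lim_{t→∞} log(t)/ω(t) = 0; (III) ω is slowly varying, i.e. for every u > 0: lim_{t→∞} ω(u·t)/ω(t) = 1, and consequently γ(ω) = +∞; (IV) there is no function σ : [0,∞) → [0,∞) equivalent to ω such that t ↦ σ(e^t) is convex on ℝ. Moreover, any two distinct elements of Ω are not equivalent. -/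
/-!
Let `stair` be the continuous non-decreasing function which, on each block `[n⁴, (n+1)⁴]`, climbs
from `n²` to `(n+1)²` with slope `1/(n+1)` and then stays flat, and let
`ω_r(t) = exp (r · stair (log t)) - 1` for `t ≥ 1` and `r > 0`.

Since `stair x ≥ √x / 4`, `ω_r(t)` dominates `(log t)²`. Since the slopes of `stair` tend to `0`,
`stair (x + log u) - stair x → 0`, which makes `ω_r` slowly varying. Yet `ω_r ∘ exp` is far from
convex: on block `n` it jumps by the factor `exp (r (2n+1))` along the ramp, which is short compared
with the block, so an equivalent `σ` with `σ ∘ exp` convex would give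
`exp (r (n+1)²) ≲ C exp (r n²) + C exp (r (n+1)²) / (n+1)`, impossible for large `n`.
Finally `ω_{r'} / ω_r` is unbounded for `r < r'`, so the uncountably many `r > 0` give pairwise
non-equivalent weights.
-/

open Filter

/-- Equivalence of weights: `∃ C ≥ 1` with `σ ≤ C·ω + C` and `ω ≤ C·σ + C`
on `[0,∞)`. -/
def EquivW (ω σ : ℝ → ℝ) : Prop :=
  ∃ C ≥ (1:ℝ), ∀ t ≥ (0:ℝ), σ t ≤ C * ω t + C ∧ ω t ≤ C * σ t + C

open Real Set Topology

noncomputable def blockIndex (x : ℝ) : ℕ := ⌊√(√x)⌋₊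

section BlockIndex

variable {x : ℝ} {n : ℕ}

lemma sqrt_sqrt_pow_four (hx : 0 ≤ x) : √(√x) ^ 4 = x := by
  rw [show 4 = 2 * 2 from rfl, pow_mul, sq_sqrt (sqrt_nonneg x), sq_sqrt hx]

lemma natCast_le_sqrt_sqrt_iff (hx : 0 ≤ x) : (n : ℝ) ≤ √(√x) ↔ (n : ℝ) ^ 4 ≤ x := by
  conv_rhs => rw [← sqrt_sqrt_pow_four hx]
  exact (pow_le_pow_iff_left₀ n.cast_nonneg (sqrt_nonneg _) (by norm_num)).symm

lemma blockIndex_mono : Monotone blockIndex := fun _ _ h ↦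
  Nat.floor_le_floor (sqrt_le_sqrt (sqrt_le_sqrt h))

lemma blockIndex_pow_four_le (hx : 0 ≤ x) : (blockIndex x : ℝ) ^ 4 ≤ x :=
  (natCast_le_sqrt_sqrt_iff hx).1 (Nat.floor_le (sqrt_nonneg _))

lemma lt_blockIndex_add_one_pow_four (hx : 0 ≤ x) : x < ((blockIndex x : ℝ) + 1) ^ 4 :=
  calc x = √(√x) ^ 4 := (sqrt_sqrt_pow_four hx).symm
    _ < _ := pow_lt_pow_left₀ (Nat.lt_floor_add_one _) (sqrt_nonneg _) (by norm_num)

lemma le_blockIndex (hn : (n : ℝ) ^ 4 ≤ x) : n ≤ blockIndex x :=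
  Nat.le_floor ((natCast_le_sqrt_sqrt_iff ((by positivity : (0 : ℝ) ≤ n ^ 4).trans hn)).2 hn)

lemma blockIndex_eq (h₁ : (n : ℝ) ^ 4 ≤ x) (h₂ : x < ((n : ℝ) + 1) ^ 4) : blockIndex x = n := by
  refine le_antisymm ?_ (le_blockIndex h₁)
  by_contra! h
  have hx : 0 ≤ x := (by positivity : (0 : ℝ) ≤ n ^ 4).trans h₁
  have : ((n : ℝ) + 1) ^ 4 ≤ x := (pow_le_pow_left₀ (by positivity)
    (by exact_mod_cast h) 4).trans (blockIndex_pow_four_le hx)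
  linarith

lemma tendsto_blockIndex : Tendsto blockIndex atTop atTop :=
  tendsto_atTop_atTop.2 fun n ↦ ⟨(n : ℝ) ^ 4, fun _ ↦ le_blockIndex⟩

end BlockIndex

/-- On the block `[n⁴, (n+1)⁴]` the function climbs from `n²` with slope `1/(n+1)` until it
reaches `(n+1)²` at `n⁴ + (2n+1)(n+1)`, and then stays flat. -/
noncomputable def stairStep (n : ℕ) (x : ℝ) : ℝ :=
  (n : ℝ) ^ 2 + min (2 * (n : ℝ) + 1) ((x - (n : ℝ) ^ 4) / ((n : ℝ) + 1))

noncomputable def stair (x : ℝ) : ℝ := stairStep (blockIndex x) x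

section StairStep

variable {n : ℕ} {x y : ℝ}

lemma stairStep_le (n : ℕ) (x : ℝ) : stairStep n x ≤ ((n : ℝ) + 1) ^ 2 := by
  have := min_le_left (2 * (n : ℝ) + 1) ((x - (n : ℝ) ^ 4) / (n + 1))
  rw [stairStep]; linarith

lemma stairStep_le_add (n : ℕ) (x : ℝ) :
    stairStep n x ≤ (n : ℝ) ^ 2 + (x - (n : ℝ) ^ 4) / (n + 1) :=
  add_le_add_right (min_le_right _ _) _

lemma sq_le_stairStep (h : (n : ℝ) ^ 4 ≤ x) : (n : ℝ) ^ 2 ≤ stairStep n x :=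
  le_add_of_nonneg_right (le_min (by positivity) (div_nonneg (by linarith) (by positivity)))

lemma stairStep_mono (n : ℕ) : Monotone (stairStep n) := fun _ _ h ↦
  add_le_add_right (min_le_min_left _ (div_le_div_of_nonneg_right (by linarith) (by positivity))) _

lemma stairStep_sub_le (n : ℕ) (hxy : x ≤ y) :
    stairStep n y - stairStep n x ≤ (y - x) / (n + 1) := by
  have hmin := (le_abs_self _).trans (abs_min_sub_min_le_max (2 * (n : ℝ) + 1)
    ((y - (n : ℝ) ^ 4) / ((n : ℝ) + 1)) (2 * (n : ℝ) + 1) ((x - (n : ℝ) ^ 4) / ((n : ℝ) + 1)))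
  rw [sub_self, abs_zero, ← sub_div, sub_sub_sub_cancel_right,
    abs_of_nonneg (div_nonneg (by linarith) (by positivity)), max_eq_right (by positivity)] at hmin
  simp only [stairStep]
  linarith

lemma sub_stairStep_le (hx : x ≤ ((n : ℝ) + 1) ^ 4) :
    ((n : ℝ) + 1) ^ 2 - stairStep n x ≤ (((n : ℝ) + 1) ^ 4 - x) / (n + 1) := by
  rw [stairStep]
  rcases min_cases (2 * (n : ℝ) + 1) ((x - (n : ℝ) ^ 4) / ((n : ℝ) + 1)) with ⟨h, -⟩ | ⟨h, -⟩ <;>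
    rw [h]
  · rw [show ((n : ℝ) + 1) ^ 2 - ((n : ℝ) ^ 2 + (2 * n + 1)) = 0 by ring]
    exact div_nonneg (by linarith) (by positivity)
  · have : ((n : ℝ) + 1) ^ 2 - ((n : ℝ) ^ 2 + (x - (n : ℝ) ^ 4) / ((n : ℝ) + 1))
        = ((n : ℝ) ^ 4 + (2 * n + 1) * (n + 1) - x) / (n + 1) := by
      field_simp; ring
    rw [this]
    exact div_le_div_of_nonneg_right (by nlinarith [n.cast_nonneg (α := ℝ)]) (by positivity)

lemma stairStep_pow_four (n : ℕ) : stairStep n ((n : ℝ) ^ 4) = (n : ℝ) ^ 2 := by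
  simp only [stairStep, sub_self, zero_div]
  rw [min_eq_right (by positivity), add_zero]

lemma stairStep_of_le (h : (n : ℝ) ^ 4 + (2 * n + 1) * (n + 1) ≤ x) :
    stairStep n x = ((n : ℝ) + 1) ^ 2 := by
  rw [stairStep, min_eq_left ((le_div_iff₀ (by positivity)).2 (by linarith))]
  ring

end StairStep

section Stair

variable {m n : ℕ} {x y : ℝ}

lemma stair_eq_stairStep (h₁ : (n : ℝ) ^ 4 ≤ x) (h₂ : x < ((n : ℝ) + 1) ^ 4) :
    stair x = stairStep n x := by
  rw [stair, blockIndex_eq h₁ h₂]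

lemma stair_pow_four (n : ℕ) : stair ((n : ℝ) ^ 4) = (n : ℝ) ^ 2 := by
  rw [stair_eq_stairStep le_rfl (pow_lt_pow_left₀ (lt_add_one _) n.cast_nonneg (by norm_num)),
    stairStep_pow_four]

lemma stair_zero : stair 0 = 0 := by simpa using stair_pow_four 0

lemma sq_blockIndex_le_stair (hx : 0 ≤ x) : (blockIndex x : ℝ) ^ 2 ≤ stair x :=
  sq_le_stairStep (blockIndex_pow_four_le hx)

lemma stair_nonneg (hx : 0 ≤ x) : 0 ≤ stair x := (sq_nonneg _).trans (sq_blockIndex_le_stair hx)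

lemma add_one_sq_le_stair (h : (n : ℝ) ^ 4 + (2 * n + 1) * (n + 1) ≤ x) :
    ((n : ℝ) + 1) ^ 2 ≤ stair x := by
  have hx : (n : ℝ) ^ 4 ≤ x := le_trans (by simp only [le_add_iff_nonneg_right]; positivity) h
  rcases (le_blockIndex hx).eq_or_lt with hn | hn
  · rw [stair, ← hn, stairStep_of_le h]
  · exact (pow_le_pow_left₀ (by positivity) (by exact_mod_cast hn) 2).trans
      (sq_blockIndex_le_stair ((by positivity : (0 : ℝ) ≤ n ^ 4).trans hx))

lemma stair_monotoneOn : MonotoneOn stair (Ici 0) := by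
  intro x _ y hy hxy
  rcases (blockIndex_mono hxy).eq_or_lt with h | h
  · rw [stair, stair, ← h]
    exact stairStep_mono _ hxy
  · calc stair x ≤ ((blockIndex x : ℝ) + 1) ^ 2 := stairStep_le _ _
      _ ≤ (blockIndex y : ℝ) ^ 2 := pow_le_pow_left₀ (by positivity) (by exact_mod_cast h) 2
      _ ≤ stair y := sq_blockIndex_le_stair hy

lemma stair_sub_le (hx : 0 ≤ x) (hm : m ≤ blockIndex x) (hxy : x ≤ y) :
    stair y - stair x ≤ (y - x) / (m + 1) := by
  set n := blockIndex x
  set p := blockIndex y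
  have hmn : (m : ℝ) + 1 ≤ n + 1 := by simpa using hm
  rw [le_div_iff₀ (by positivity)]
  rcases (blockIndex_mono hxy).eq_or_lt with h | h
  · have := (le_div_iff₀ (by positivity)).1 (stairStep_sub_le n hxy)
    rw [stair, stair, ← h]
    nlinarith [stairStep_mono n hxy]
  · -- finish block `n`, cross the blocks strictly between, then climb inside block `p`
    have hnp : (n : ℝ) + 1 ≤ p := by exact_mod_cast h
    have hp : (p : ℝ) ^ 4 ≤ y := blockIndex_pow_four_le (hx.trans hxy)
    have hclimb : (stair y - (p : ℝ) ^ 2) * ((m : ℝ) + 1) ≤ y - (p : ℝ) ^ 4 :=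
      (mul_le_mul_of_nonneg_left (by linarith)
        (sub_nonneg.2 (sq_blockIndex_le_stair (hx.trans hxy)))).trans
        ((le_div_iff₀ (by positivity)).1 (sub_le_iff_le_add'.2 (stairStep_le_add p y)))
    have hfinish : (((n : ℝ) + 1) ^ 2 - stair x) * ((m : ℝ) + 1) ≤ ((n : ℝ) + 1) ^ 4 - x :=
      (mul_le_mul_of_nonneg_left hmn (sub_nonneg.2 (stairStep_le n x))).trans
        ((le_div_iff₀ (by positivity)).1 (sub_stairStep_le (lt_blockIndex_add_one_pow_four hx).le))
    have hcross : ((p : ℝ) ^ 2 - ((n : ℝ) + 1) ^ 2) * ((m : ℝ) + 1)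
        ≤ (p : ℝ) ^ 4 - ((n : ℝ) + 1) ^ 4 := by
      have hsq : ((n : ℝ) + 1) ^ 2 ≤ (p : ℝ) ^ 2 := pow_le_pow_left₀ (by positivity) hnp 2
      nlinarith [mul_nonneg (sub_nonneg.2 hsq) (by nlinarith : (0 : ℝ) ≤ (p : ℝ) ^ 2
        + ((n : ℝ) + 1) ^ 2 - ((m : ℝ) + 1))]
    linarith

end Stair

section StairAsymptotics

variable {x : ℝ}

lemma stair_lipschitzOnWith : LipschitzOnWith 1 stair (Ici 0) := by
  refine LipschitzOnWith.of_le_add_mul 1 fun x hx y hy ↦ ?_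
  rw [NNReal.coe_one, one_mul, dist_eq]
  rcases le_total x y with hxy | hxy
  · linarith [stair_monotoneOn hx hy hxy, abs_nonneg (x - y)]
  · have := stair_sub_le hy (Nat.zero_le _) hxy
    rw [abs_of_nonneg (sub_nonneg.2 hxy)]
    simp only [CharP.cast_eq_zero, zero_add, div_one] at this
    linarith

lemma tendsto_stair_add_sub (c : ℝ) :
    Tendsto (fun x ↦ stair (x + c) - stair x) atTop (𝓝 0) := by
  have hbound : Tendsto (fun x ↦ |c| / ((blockIndex (x - |c|) : ℝ) + 1)) atTop (𝓝 0) :=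
    tendsto_const_nhds.div_atTop <| tendsto_atTop_add_const_right _ 1 <|
      tendsto_natCast_atTop_atTop.comp <| tendsto_blockIndex.comp <|
        tendsto_atTop_add_const_right _ (-|c|) tendsto_id
  refine squeeze_zero_norm' ?_ hbound
  filter_upwards [eventually_ge_atTop (2 * |c|)] with x hx
  have h₀ : 0 ≤ x - |c| := by linarith [abs_nonneg c]
  rw [norm_eq_abs]
  rcases le_total 0 c with hc | hc
  · rw [abs_of_nonneg hc] at h₀ ⊢
    rw [abs_of_nonneg (sub_nonneg.2 (stair_monotoneOn (mem_Ici.2 (by linarith))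
      (mem_Ici.2 (by linarith)) (by linarith)))]
    simpa using stair_sub_le (by linarith) (blockIndex_mono (by linarith : x - c ≤ x))
      (le_add_of_nonneg_right hc)
  · rw [abs_of_nonpos hc] at h₀ ⊢
    rw [abs_sub_comm, abs_of_nonneg (sub_nonneg.2 (stair_monotoneOn (mem_Ici.2 (by linarith))
      (mem_Ici.2 (by linarith)) (by linarith)))]
    have := stair_sub_le (by linarith) (blockIndex_mono (by linarith : x - -c ≤ x + c))
      (by linarith : x + c ≤ x)
    rwa [show x - (x + c) = -c by ring] at this

lemma sqrt_le_four_mul_stair (hx : 1 ≤ x) : √x ≤ 4 * stair x := by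
  have hx₀ : 0 ≤ x := zero_le_one.trans hx
  have hn : (1 : ℝ) ≤ blockIndex x := by exact_mod_cast le_blockIndex (n := 1) (by simpa using hx)
  have hblock : ((blockIndex x : ℝ) + 1) ^ 4 ≤ (2 * blockIndex x) ^ 4 :=
    pow_le_pow_left₀ (by positivity) (by linarith) 4
  have hsq := sq_blockIndex_le_stair hx₀
  refine sqrt_le_iff.2 ⟨by linarith [stair_nonneg hx₀], ?_⟩
  nlinarith [lt_blockIndex_add_one_pow_four hx₀, sq_nonneg (blockIndex x : ℝ)]

lemma tendsto_stair : Tendsto stair atTop atTop :=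
  tendsto_atTop_mono' _ (eventually_ge_atTop 1 |>.mono fun _ hx ↦ by
    linarith [sqrt_le_four_mul_stair hx])
    (tendsto_sqrt_atTop.atTop_div_const (by norm_num : (0 : ℝ) < 4))

end StairAsymptotics

lemma pow_four_div_le_exp_sub_one {y : ℝ} (hy : 0 ≤ y) : y ^ 4 / 24 ≤ exp y - 1 := by
  have := sum_le_exp_of_nonneg hy 5
  simp only [Finset.sum_range_succ, Finset.sum_range_zero, Nat.factorial] at this
  norm_num at this
  nlinarith [pow_nonneg hy 2, pow_nonneg hy 3]

lemma tendsto_exp_sub_one_div_exp_sub_one {α : Type*} {l : Filter α} {a b : α → ℝ}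
    (ha : Tendsto a l atTop) (hab : Tendsto (fun x ↦ b x - a x) l (𝓝 0)) :
    Tendsto (fun x ↦ (exp (b x) - 1) / (exp (a x) - 1)) l (𝓝 1) := by
  have hexp : Tendsto (fun x ↦ exp (-a x)) l (𝓝 0) := tendsto_exp_neg_atTop_nhds_zero.comp ha
  have hnum : Tendsto (fun x ↦ exp (b x - a x) - exp (-a x)) l (𝓝 (1 - 0)) := by
    simpa using ((continuous_exp.tendsto 0).comp hab).sub hexp
  have := hnum.div (tendsto_const_nhds.sub hexp) (by norm_num : (1 : ℝ) - 0 ≠ 0)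
  rw [sub_zero, div_one] at this
  refine this.congr fun x ↦ ?_
  -- multiply numerator and denominator by `exp (a x)`
  rw [Pi.div_apply, ← mul_div_mul_left _ (1 - exp (-a x)) (exp_pos (a x)).ne', mul_sub, mul_sub,
    mul_one, ← exp_add, ← exp_add, add_sub_cancel, add_neg_cancel, exp_zero]

lemma pcond_of_tendsto_div_nhds_one {ω : ℝ → ℝ}
    (h : ∀ u > (0 : ℝ), Tendsto (fun t ↦ ω (u * t) / ω t) atTop (𝓝 1)) (γ : ℝ) : Pcond ω γ :=
  ⟨2, one_lt_two, 3 / 2, by norm_num,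
    (h _ (rpow_pos_of_pos two_pos γ)).eventually_le_const (by norm_num)⟩

lemma EquivW.refl (ω : ℝ → ℝ) : EquivW ω ω :=
  ⟨1, le_rfl, fun t _ ↦ ⟨by linarith, by linarith⟩⟩

lemma EquivW.symm {ω σ : ℝ → ℝ} (h : EquivW ω σ) : EquivW σ ω :=
  let ⟨C, hC, hb⟩ := h
  ⟨C, hC, fun t ht ↦ (hb t ht).symm⟩

lemma EquivW.exists_le_convexComb {ω σ : ℝ → ℝ} (hωσ : EquivW ω σ)
    (hσ : ConvexOn ℝ univ fun t ↦ σ (exp t)) :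
    ∃ C ≥ (0 : ℝ), ∃ D, ∀ x y a b : ℝ, 0 ≤ a → 0 ≤ b → a + b = 1 →
      ω (exp (a * x + b * y)) ≤ C * (a * ω (exp x) + b * ω (exp y)) + D := by
  obtain ⟨C, hC, h⟩ := hωσ
  refine ⟨C ^ 2, by positivity, C ^ 2 + C, fun x y a b ha hb hab ↦ ?_⟩
  have hconv := hσ.2 (mem_univ x) (mem_univ y) ha hb hab
  simp only [smul_eq_mul] at hconv
  have hx := (h (exp x) (exp_pos x).le).1
  have hy := (h (exp y) (exp_pos y).le).1
  calc ω (exp (a * x + b * y)) ≤ C * σ (exp (a * x + b * y)) + C := (h _ (exp_pos _).le).2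
    _ ≤ C * (a * σ (exp x) + b * σ (exp y)) + C := by gcongr
    _ ≤ C * (a * (C * ω (exp x) + C) + b * (C * ω (exp y) + C)) + C := by gcongr
    _ = C ^ 2 * (a * ω (exp x) + b * ω (exp y)) + (C ^ 2 + C) := by
      linear_combination C ^ 2 * hab

noncomputable def weight (r t : ℝ) : ℝ := exp (r * stair (log (max t 1))) - 1

section Weight

variable {r r' t u : ℝ}

lemma weight_of_one_le (ht : 1 ≤ t) : weight r t = exp (r * stair (log t)) - 1 := by
  rw [weight, max_eq_left ht]

lemma weight_exp {x : ℝ} (hx : 0 ≤ x) : weight r (exp x) = exp (r * stair x) - 1 := by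
  rw [weight_of_one_le (one_le_exp hx), log_exp]

lemma weight_of_le_one (ht : t ≤ 1) : weight r t = 0 := by
  rw [weight, max_eq_right ht, log_one, stair_zero, mul_zero, exp_zero, sub_self]

lemma weight_nonneg (hr : 0 ≤ r) (t : ℝ) : 0 ≤ weight r t :=
  sub_nonneg.2 (one_le_exp (mul_nonneg hr (stair_nonneg (log_nonneg (le_max_right t 1)))))

lemma weight_mono (hr : 0 ≤ r) : Monotone (weight r) := fun s t hst ↦ by
  have hlog : log (max s 1) ≤ log (max t 1) :=
    log_le_log (by positivity) (max_le_max_right 1 hst)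
  unfold weight
  gcongr
  exact stair_monotoneOn (log_nonneg (le_max_right s 1)) (log_nonneg (le_max_right t 1)) hlog

lemma continuous_weight (r : ℝ) : Continuous (weight r) := by
  have : Continuous fun t : ℝ ↦ stair (log (max t 1)) :=
    stair_lipschitzOnWith.continuousOn.comp_continuous
      ((continuous_id.max continuous_const).log fun t ↦ by positivity)
      fun t ↦ log_nonneg (le_max_right t 1)
  exact (continuous_const.mul this).rexp.sub continuous_const

lemma log_sq_le_weight (hr : 0 < r) (ht : exp 1 ≤ t) :
    r ^ 4 * log t ^ 2 ≤ 6144 * weight r t := by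
  have ht₀ : 0 < t := (exp_pos 1).trans_le ht
  have hx : 1 ≤ log t := by rwa [le_log_iff_exp_le ht₀]
  have hstair : r * √(log t) / 4 ≤ r * stair (log t) := by
    nlinarith [sqrt_le_four_mul_stair hx]
  have hpow : r ^ 4 * log t ^ 2 / 256 ≤ (r * stair (log t)) ^ 4 := by
    calc r ^ 4 * log t ^ 2 / 256 = (r * √(log t) / 4) ^ 4 := by
          rw [div_pow, mul_pow, show √(log t) ^ 4 = (√(log t) ^ 2) ^ 2 by ring,
            sq_sqrt (by linarith)]
          ring
      _ ≤ _ := pow_le_pow_left₀ (by positivity) hstair 4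
  have := pow_four_div_le_exp_sub_one ((by positivity : 0 ≤ r * √(log t) / 4).trans hstair)
  rw [weight_of_one_le (one_le_exp zero_le_one |>.trans ht)]
  linarith

lemma tendsto_weight_atTop (hr : 0 < r) : Tendsto (weight r) atTop atTop := by
  refine tendsto_atTop_mono' _ ?_ <|
    (((tendsto_pow_atTop two_ne_zero).comp tendsto_log_atTop).const_mul_atTop
      (pow_pos hr 4)).atTop_div_const (by norm_num : (0 : ℝ) < 6144)
  filter_upwards [eventually_ge_atTop (exp 1)] with t ht
  have := log_sq_le_weight hr ht
  simp only [Function.comp_apply]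
  linarith

lemma tendsto_log_div_weight (hr : 0 < r) :
    Tendsto (fun t ↦ log t / weight r t) atTop (𝓝 0) := by
  refine squeeze_zero' ?_ ?_ (tendsto_const_nhds.div_atTop
    (tendsto_log_atTop.const_mul_atTop (pow_pos hr 4)) (a := 6144))
  · filter_upwards [eventually_ge_atTop 1] with t ht
    exact div_nonneg (log_nonneg ht) (weight_nonneg hr.le t)
  · filter_upwards [eventually_ge_atTop (exp 1)] with t ht
    have hx : 1 ≤ log t := by rwa [le_log_iff_exp_le ((exp_pos 1).trans_le ht)]
    have hw := log_sq_le_weight hr ht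
    have hw₀ : 0 < weight r t := by
      nlinarith [mul_pos (pow_pos hr 4) (pow_pos (by linarith : 0 < log t) 2)]
    rw [div_le_div_iff₀ hw₀ (by positivity)]
    nlinarith

lemma tendsto_weight_mul_div_weight (hr : 0 < r) (hu : 0 < u) :
    Tendsto (fun t ↦ weight r (u * t) / weight r t) atTop (𝓝 1) := by
  have ha : Tendsto (fun t ↦ r * stair (log t)) atTop atTop :=
    (tendsto_stair.comp tendsto_log_atTop).const_mul_atTop hr
  have hab : Tendsto (fun t ↦ r * stair (log t + log u) - r * stair (log t)) atTop (𝓝 0) := by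
    simpa [mul_sub] using ((tendsto_stair_add_sub (log u)).comp tendsto_log_atTop).const_mul r
  refine (tendsto_exp_sub_one_div_exp_sub_one ha hab).congr' ?_
  filter_upwards [eventually_ge_atTop 1, eventually_ge_atTop u⁻¹] with t ht hut
  have hut' : 1 ≤ u * t := by rwa [inv_le_iff_one_le_mul₀' hu] at hut
  rw [weight_of_one_le ht, weight_of_one_le hut', log_mul hu.ne' (by positivity), add_comm (log u)]

lemma not_equivW_weight_of_lt (hr : 0 ≤ r) (hrr' : r < r') :
    ¬ EquivW (weight r) (weight r') := by
  rintro ⟨C, -, hbound⟩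
  have hgrow : Tendsto (fun x ↦ exp ((r' - r) * stair x)) atTop atTop :=
    tendsto_exp_atTop.comp (tendsto_stair.const_mul_atTop (sub_pos.2 hrr'))
  obtain ⟨x, hx₀, hx⟩ := ((eventually_ge_atTop 0).and (hgrow.eventually_gt_atTop (C + 1))).exists
  have h := (hbound (exp x) (exp_pos x).le).1
  rw [weight_exp hx₀, weight_exp hx₀] at h
  have h₁ : 1 ≤ exp (r * stair x) := one_le_exp (mul_nonneg hr (stair_nonneg hx₀))
  have h₂ : exp ((r' - r) * stair x) * exp (r * stair x) = exp (r' * stair x) := by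
    rw [← exp_add]; ring_nf
  nlinarith

lemma not_equivW_weight (hr : 0 ≤ r) (hr' : 0 ≤ r') (hne : r ≠ r') :
    ¬ EquivW (weight r) (weight r') := by
  rcases hne.lt_or_gt with h | h
  · exact not_equivW_weight_of_lt hr h
  · exact fun he ↦ not_equivW_weight_of_lt hr' h he.symm

lemma injOn_weight : InjOn weight (Ici 0) := fun r hr r' hr' h ↦ by
  by_contra hne
  exact not_equivW_weight hr hr' hne (h ▸ EquivW.refl _)

end Weight

section NotConvex

variable {r C D : ℝ}

/-- The convex combination of `n⁴` and `(n+1)⁴` with weights `n/(n+1)`, `1/(n+1)` lies on the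
flat part of block `n`, where `weight r ∘ exp` already takes its value at `(n+1)⁴`. -/
lemma one_sub_div_le_of_weight_exp_le (hr : 0 ≤ r) (hC : 0 ≤ C)
    (hbound : ∀ x y a b : ℝ, 0 ≤ a → 0 ≤ b → a + b = 1 →
      weight r (exp (a * x + b * y)) ≤ C * (a * weight r (exp x) + b * weight r (exp y)) + D)
    (n : ℕ) :
    1 - C / (n + 1) ≤ C * exp (-(r * (2 * n + 1))) + (D + 1) * exp (-(r * (n + 1) ^ 2)) := by
  set a : ℝ := n / (n + 1) with ha_def
  set b : ℝ := 1 / (n + 1) with hb_def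
  have hab : a + b = 1 := by rw [ha_def, hb_def, ← add_div, div_self (by positivity)]
  have hmid : (n : ℝ) ^ 4 + (2 * n + 1) * (n + 1) ≤ a * (n : ℝ) ^ 4 + b * ((n : ℝ) + 1) ^ 4 := by
    rw [ha_def, hb_def, div_mul_eq_mul_div, div_mul_eq_mul_div, ← add_div,
      le_div_iff₀ (by positivity)]
    have hn : (0 : ℝ) ≤ n := n.cast_nonneg
    nlinarith [pow_nonneg hn 2, pow_nonneg hn 3]
  have h := hbound ((n : ℝ) ^ 4) (((n : ℝ) + 1) ^ 4) a b (by positivity) (by positivity) hab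
  have hend := stair_pow_four (n + 1)
  push_cast at hend
  rw [weight_exp (by positivity), weight_exp (by positivity), weight_exp (by positivity),
    stair_pow_four, hend] at h
  set A := exp (r * (n : ℝ) ^ 2)
  set B := exp (r * ((n : ℝ) + 1) ^ 2)
  have hA : 1 ≤ A := one_le_exp (by positivity)
  have hB : 1 ≤ B := one_le_exp (by positivity)
  have hjump : B ≤ exp (r * stair (a * (n : ℝ) ^ 4 + b * ((n : ℝ) + 1) ^ 4)) :=
    exp_le_exp.2 (mul_le_mul_of_nonneg_left (add_one_sq_le_stair hmid) hr)
  have ha : a ≤ 1 := by linarith [(by positivity : 0 ≤ b)]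
  have hkey : B * (1 - C / (n + 1)) ≤ C * A + (D + 1) := by
    have h₁ : C * (a * (A - 1)) ≤ C * A := by
      nlinarith [mul_le_mul_of_nonneg_right ha (by linarith : 0 ≤ A - 1)]
    have h₂ : C * (b * (B - 1)) ≤ C * B / (n + 1) := by
      rw [div_eq_mul_one_div _ ((n : ℝ) + 1)]
      nlinarith [(by positivity : 0 ≤ b)]
    rw [mul_sub, mul_one, mul_div_assoc', mul_comm B C]
    nlinarith
  have hA' : exp (-(r * (2 * n + 1))) = A / B := by
    rw [← exp_sub]; ring_nf
  have hB' : exp (-(r * (n + 1) ^ 2)) = 1 / B := by rw [exp_neg, one_div]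
  rw [hA', hB', mul_div_assoc', mul_one_div, ← add_div, le_div_iff₀ (by positivity),
    mul_comm]
  exact hkey

lemma not_convexOn_of_equivW_weight {σ : ℝ → ℝ} (hr : 0 < r) (hσ : EquivW (weight r) σ) :
    ¬ ConvexOn ℝ univ fun t ↦ σ (exp t) := by
  intro hconv
  obtain ⟨C, hC, D, hbound⟩ := hσ.exists_le_convexComb hconv
  have hn : Tendsto (fun n : ℕ ↦ (n : ℝ) + 1) atTop atTop :=
    tendsto_atTop_add_const_right _ 1 tendsto_natCast_atTop_atTop
  have hlhs : Tendsto (fun n : ℕ ↦ 1 - C / ((n : ℝ) + 1)) atTop (𝓝 1) := by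
    simpa using tendsto_const_nhds.sub (tendsto_const_nhds.div_atTop hn)
  have hrhs : Tendsto
      (fun n : ℕ ↦ C * exp (-(r * (2 * n + 1))) + (D + 1) * exp (-(r * (n + 1) ^ 2)))
      atTop (𝓝 0) := by
    have h₁ : Tendsto (fun n : ℕ ↦ r * (2 * (n : ℝ) + 1)) atTop atTop :=
      (tendsto_atTop_add_const_right _ 1
        (tendsto_natCast_atTop_atTop.const_mul_atTop two_pos)).const_mul_atTop hr
    have h₂ : Tendsto (fun n : ℕ ↦ r * ((n : ℝ) + 1) ^ 2) atTop atTop :=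
      ((tendsto_pow_atTop two_ne_zero).comp hn).const_mul_atTop hr
    simpa using ((tendsto_exp_neg_atTop_nhds_zero.comp h₁).const_mul C).add
      ((tendsto_exp_neg_atTop_nhds_zero.comp h₂).const_mul (D + 1))
  have := le_of_tendsto_of_tendsto' hlhs hrhs (one_sub_div_le_of_weight_exp_le hr.le hC hbound)
  norm_num at this

end NotConvex

/-- there is an uncountable family `Ω` of pairwise
non-equivalent weights `ω : [0,∞) → [0,∞)` which are normalized, continuous,
non-decreasing, tend to `+∞`, satisfy `log t = o(ω(t))`, are slowly varying
(hence have growth index `γ(ω) = +∞`), and such that no function equivalent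
to `ω` has a convex composition with `exp`. -/
theorem stmt_19 :
    ∃ Ω : Set (ℝ → ℝ), ¬ Ω.Countable ∧
      (∀ ω ∈ Ω,
        -- (I)
        ((∀ t, 0 ≤ t → 0 ≤ ω t) ∧ (∀ t, 0 ≤ t → t ≤ 1 → ω t = 0) ∧
          ContinuousOn ω (Set.Ici (0:ℝ)) ∧
          (∀ s t, 0 ≤ s → s ≤ t → ω s ≤ ω t) ∧
          Tendsto ω atTop atTop) ∧
        -- (II) log t = o(ω t)
        Tendsto (fun t => Real.log t / ω t) atTop (nhds 0) ∧
        -- (III) slowly varying, and γ(ω) = +∞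
        ((∀ u > (0:ℝ), Tendsto (fun t => ω (u * t) / ω t) atTop (nhds 1)) ∧
          (∀ γ > (0:ℝ), Pcond ω γ)) ∧
        -- (IV) no equivalent weight with convex φ_σ
        (¬ ∃ σ : ℝ → ℝ, (∀ t ≥ (0:ℝ), 0 ≤ σ t) ∧ EquivW ω σ ∧
          ConvexOn ℝ Set.univ (fun t : ℝ => σ (Real.exp t)))) ∧
      (∀ ω₁ ∈ Ω, ∀ ω₂ ∈ Ω, ω₁ ≠ ω₂ → ¬ EquivW ω₁ ω₂) := by
  have hIoi : ¬ (Ioi (0 : ℝ)).Countable := fun h ↦ by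
    simpa using h.measure_zero MeasureTheory.volume
  refine ⟨weight '' Ioi 0, fun hcount ↦ ?_, ?_, ?_⟩
  · exact hIoi (countable_of_injective_of_countable_image
      (injOn_weight.mono Ioi_subset_Ici_self) hcount)
  · rintro _ ⟨r, hr, rfl⟩
    have hslow := fun u (hu : 0 < u) ↦ tendsto_weight_mul_div_weight hr hu
    exact ⟨⟨fun t _ ↦ weight_nonneg hr.le t, fun t _ ht ↦ weight_of_le_one ht,
      (continuous_weight r).continuousOn, fun s t _ hst ↦ weight_mono hr.le hst,
      tendsto_weight_atTop hr⟩, tendsto_log_div_weight hr,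
      ⟨hslow, fun γ _ ↦ pcond_of_tendsto_div_nhds_one hslow γ⟩,
      fun ⟨σ, _, hσ, hconv⟩ ↦ not_convexOn_of_equivW_weight hr hσ hconv⟩
  · rintro _ ⟨r, hr, rfl⟩ _ ⟨r', hr', rfl⟩ hne
    exact not_equivW_weight (le_of_lt hr) (le_of_lt hr') fun h ↦ hne (h ▸ rfl)
end
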